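/- arXiv:0906.4003 — 13 statements merged into one kernel-verified Lean document; each statement's English description precedes it below -/
import Mathlib

section
/- Let (Ω, μ) be a probability space, let T : Ω → Ω be a measurable map preserving μ, and let f ∈ L¹(Ω, μ). Then for every n ∈ ℕ, the heavy set through time n, H_T^f(0,n) = {ω ∈ Ω : ∀ i with 0 ≤ i ≤ n, S_i(ω) ≥ i·∫_Ω f dμ}, has positive μ-measure. -/
/-!
Put `φ = ∫ f - f`, a function of mean zero, and let `M_k = max (S_0, …, S_k)` be the running
maximum of its Birkhoff sums, so that the heavy set through time `n` is `{M_n ≤ 0}`. Suppose it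
were null. Wherever `M_{k+1} > 0` we have `M_{k+1} = φ + M_k ∘ T`, so `M_{k+1} > 0` a.e. and the
invariance of `μ` give `∫ M_{k+1} = ∫ φ + ∫ M_k = ∫ M_k`; as `M_k ≤ M_{k+1}`, the two agree a.e.,
hence `M_k > 0` a.e. as well. Descending to `M_0 = 0` gives a contradiction.
-/

open MeasureTheory Filter

section MaxBirkhoffSum

variable {α : Type*} (T : α → α) (φ : α → ℝ)

/-- The running maximum `max (birkhoffSum T φ 0 x, …, birkhoffSum T φ k x)`. -/
noncomputable def maxBirkhoffSum : ℕ → α → ℝ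
  | 0 => 0
  | k + 1 => fun x => max 0 (φ x + maxBirkhoffSum k (T x))

theorem maxBirkhoffSum_le_iff (k : ℕ) (x : α) (r : ℝ) :
    maxBirkhoffSum T φ k x ≤ r ↔ ∀ i ≤ k, birkhoffSum T φ i x ≤ r := by
  induction k generalizing x r with
  | zero => simp [maxBirkhoffSum]
  | succ k ih =>
    rw [maxBirkhoffSum, max_le_iff, ← le_sub_iff_add_le', ih]
    simp only [← Nat.lt_succ_iff, Nat.forall_lt_succ_left, birkhoffSum_zero, birkhoffSum_succ',
      le_sub_iff_add_le']

theorem maxBirkhoffSum_le_succ (k : ℕ) :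
    maxBirkhoffSum T φ k ≤ maxBirkhoffSum T φ (k + 1) := fun x =>
  (maxBirkhoffSum_le_iff T φ k x _).2 fun i hi =>
    (maxBirkhoffSum_le_iff T φ (k + 1) x _).1 le_rfl i (hi.trans k.le_succ)

variable {T φ} [MeasurableSpace α] {μ : Measure α}

theorem integrable_maxBirkhoffSum (hT : MeasurePreserving T μ μ) (hφ : Integrable φ μ) (k : ℕ) :
    Integrable (maxBirkhoffSum T φ k) μ := by
  induction k with
  | zero => exact integrable_zero _ _ _
  | succ k ih => exact (integrable_zero _ _ _).sup (hφ.add (hT.integrable_comp_of_integrable ih))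

theorem maxBirkhoffSum_ae_eq_succ_of_ae_pos (hT : MeasurePreserving T μ μ) (hφ : Integrable φ μ)
    (hφ_nonpos : ∫ x, φ x ∂μ ≤ 0) {k : ℕ} (hpos : ∀ᵐ x ∂μ, 0 < maxBirkhoffSum T φ (k + 1) x) :
    maxBirkhoffSum T φ k =ᵐ[μ] maxBirkhoffSum T φ (k + 1) := by
  have hM := integrable_maxBirkhoffSum hT hφ
  have hstep : maxBirkhoffSum T φ (k + 1) =ᵐ[μ] fun x => φ x + maxBirkhoffSum T φ k (T x) := by
    filter_upwards [hpos] with x hx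
    rw [maxBirkhoffSum, lt_max_iff, lt_self_iff_false, false_or] at hx
    exact max_eq_right hx.le
  have hcomp_int : Integrable (fun x => maxBirkhoffSum T φ k (T x)) μ :=
    hT.integrable_comp_of_integrable (hM k)
  have hcomp : ∫ x, maxBirkhoffSum T φ k (T x) ∂μ = ∫ x, maxBirkhoffSum T φ k x ∂μ := by
    have hmeas := (hM k).aestronglyMeasurable
    rw [← hT.map_eq] at hmeas
    rw [← integral_map hT.aemeasurable hmeas, hT.map_eq]
  refine (integral_eq_iff_of_ae_le (hM k) (hM (k + 1))
    (Eventually.of_forall (maxBirkhoffSum_le_succ T φ k))).1 (le_antisymm ?_ ?_)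
  · exact integral_mono (hM k) (hM (k + 1)) (maxBirkhoffSum_le_succ T φ k)
  · rw [integral_congr_ae hstep, integral_add hφ hcomp_int, hcomp]
    linarith

theorem not_ae_pos_maxBirkhoffSum [NeZero μ] (hT : MeasurePreserving T μ μ) (hφ : Integrable φ μ)
    (hφ_nonpos : ∫ x, φ x ∂μ ≤ 0) (n : ℕ) : ¬ ∀ᵐ x ∂μ, 0 < maxBirkhoffSum T φ n x := by
  induction n with
  | zero => simpa [maxBirkhoffSum] using NeZero.ne μ
  | succ n ih =>
    intro hpos
    refine ih ?_
    filter_upwards [hpos, maxBirkhoffSum_ae_eq_succ_of_ae_pos hT hφ hφ_nonpos hpos] with x hx hx'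
    rwa [hx']

theorem measure_forall_birkhoffSum_nonpos_pos [NeZero μ] (hT : MeasurePreserving T μ μ)
    (hφ : Integrable φ μ) (hφ_nonpos : ∫ x, φ x ∂μ ≤ 0) (n : ℕ) :
    0 < μ {x | ∀ i ≤ n, birkhoffSum T φ i x ≤ 0} := by
  simp_rw [pos_iff_ne_zero, ← maxBirkhoffSum_le_iff, Ne, measure_eq_zero_iff_ae_notMem,
    Set.mem_ofPred_eq, not_le]
  exact not_ae_pos_maxBirkhoffSum hT hφ hφ_nonpos n

end MaxBirkhoffSum

/-- For a measure-preserving map `T` of a probability space `(Ω, μ)` and an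
integrable `f`, the heavy set through time `n` has positive measure. -/
theorem heavy_set_through_time_pos_measure
    {Ω : Type*} [MeasurableSpace Ω] (μ : Measure Ω) [IsProbabilityMeasure μ]
    (T : Ω → Ω) (hT : MeasurePreserving T μ μ)
    (f : Ω → ℝ) (hf : Integrable f μ) (n : ℕ) :
    0 < μ {ω | ∀ i : ℕ, i ≤ n →
      (i : ℝ) * ∫ x, f x ∂μ ≤ ∑ k ∈ Finset.range i, f (T^[k] ω)} := by
  set c := ∫ x, f x ∂μ
  have hφ : Integrable (fun x => c - f x) μ := (integrable_const c).sub hf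
  have hφ_mean : ∫ x, c - f x ∂μ = 0 := by simp [integral_sub (integrable_const c) hf, c]
  have hsum (i : ℕ) (ω : Ω) :
      birkhoffSum T (fun x => c - f x) i ω = i * c - ∑ k ∈ Finset.range i, f (T^[k] ω) := by
    simp [birkhoffSum, Finset.sum_sub_distrib]
  simpa only [hsum, sub_nonpos] using
    measure_forall_birkhoffSum_nonpos_pos hT hφ hφ_mean.le n
end

section
/- Let Ω be a compact topological space with a Borel probability measure μ, let T : Ω → Ω be a continuous map preserving μ, and let f : Ω → ℝ be an upper semicontinuous, μ-integrable function. Then there exists a point ω ∈ Ω such that for every n ∈ ℕ, S_n(ω) ≥ n·∫_Ω f dμ; that is, the heavy set H_T^f(ℕ) is nonempty. -/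
/-!
Replace `f` by `g = f - ∫ f`, so that `∫ g = 0`. The sets `{ω | ∀ k ≤ n, 0 ≤ S_k g ω}` are
closed and decreasing, so by compactness it suffices that each is nonempty. If one is empty,
compactness and upper semicontinuity give `N` and `δ > 0` such that from every point the Birkhoff
sum drops to `-δ` within `N` steps. Restarting at each drop, `S_L g ≤ N B + δ - δ L / N`
everywhere, where `B` bounds `g` from above; for large `L` this contradicts `∫ S_L g = L ∫ g = 0`.
-/

open MeasureTheory Function Set

section Drift

variable {α : Type*} {T : α → α} {g : α → ℝ}

theorem birkhoffSum_le_mul_of_le {B : ℝ} (hgB : ∀ x, g x ≤ B) (n : ℕ) (x : α) :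
    birkhoffSum T g n x ≤ n * B := by
  unfold birkhoffSum
  simpa using Finset.sum_le_card_nsmul (Finset.range n) _ B fun i _ => hgB (T^[i] x)

-- `S_L ≤ N B + δ - δ L / N`, multiplied out by `N`.
theorem mul_le_of_forall_exists_birkhoffSum_le_neg {B δ : ℝ} {N : ℕ} (hB : 0 ≤ B)
    (hδ : 0 < δ) (hgB : ∀ x, g x ≤ B) (hdrop : ∀ x, ∃ k ≤ N, birkhoffSum T g k x ≤ -δ)
    (L : ℕ) (x : α) : δ * L ≤ N * (N * B + δ - birkhoffSum T g L x) := by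
  induction L using Nat.strong_induction_on generalizing x with
  | _ L ih =>
    obtain ⟨k, hkN, hk⟩ := hdrop x
    have hk0 : k ≠ 0 := by rintro rfl; rw [birkhoffSum_zero] at hk; linarith
    have hkN' : (k : ℝ) ≤ N := by exact_mod_cast hkN
    rcases lt_or_ge L N with hLN | hNL
    · have hLN' : (L : ℝ) ≤ N := by exact_mod_cast hLN.le
      have hSL : birkhoffSum T g L x ≤ N * B :=
        (birkhoffSum_le_mul_of_le hgB L x).trans (by nlinarith)
      nlinarith [mul_nonneg (Nat.cast_nonneg (α := ℝ) N) (sub_nonneg.2 hSL)]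
    · obtain ⟨m, rfl⟩ := Nat.exists_eq_add_of_le (hkN.trans hNL)
      have hrest := ih m (by omega) (T^[k] x)
      rw [birkhoffSum_add]
      push_cast
      nlinarith

end Drift

section Compact

variable {Ω : Type*} [TopologicalSpace Ω]

theorem UpperSemicontinuous.birkhoffSum {T : Ω → Ω} {g : Ω → ℝ} (hg : UpperSemicontinuous g)
    (hT : Continuous T) (n : ℕ) : UpperSemicontinuous (birkhoffSum T g n) :=
  upperSemicontinuous_sum fun i _ => hg.comp (hT.iterate i)

theorem exists_forall_exists_le_neg_of_upperSemicontinuous [CompactSpace Ω] {φ : ℕ → Ω → ℝ}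
    (hφ : ∀ n, UpperSemicontinuous (φ n)) (hneg : ∀ x, ∃ n, φ n x < 0) :
    ∃ N, ∃ δ > 0, ∀ x, ∃ k ≤ N, φ k x ≤ -δ := by
  let U : ℕ × ℕ → Set Ω := fun p => {x | φ p.1 x < -(1 / (p.2 + 1))}
  have hcover : univ ⊆ ⋃ p, U p := fun x _ => by
    obtain ⟨n, hn⟩ := hneg x
    obtain ⟨m, hm⟩ := exists_nat_one_div_lt (neg_pos.2 hn)
    exact mem_iUnion.2 ⟨(n, m), show φ n x < _ by linarith⟩
  obtain ⟨u, hu⟩ := isCompact_univ.elim_finite_subcover U (fun p => (hφ p.1).isOpen_preimage _)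
    hcover
  refine ⟨u.sup Prod.fst, 1 / (u.sup Prod.snd + 1), by positivity, fun x => ?_⟩
  obtain ⟨p, hp, hx⟩ := mem_iUnion₂.1 (hu (mem_univ x))
  refine ⟨p.1, Finset.le_sup (f := Prod.fst) hp, ?_⟩
  have hm : (p.2 : ℝ) ≤ u.sup Prod.snd := by exact_mod_cast Finset.le_sup (f := Prod.snd) hp
  have : 1 / ((u.sup Prod.snd : ℕ) + 1 : ℝ) ≤ 1 / (p.2 + 1) := by gcongr
  exact (le_of_lt hx).trans (by linarith)

theorem UpperSemicontinuous.exists_forall_le [CompactSpace Ω] {g : Ω → ℝ}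
    (hg : UpperSemicontinuous g) : ∃ B, ∀ x, g x ≤ B := by
  obtain ⟨B, hB⟩ := (hg.upperSemicontinuousOn univ).bddAbove_of_isCompact isCompact_univ
  exact ⟨B, fun x => hB (mem_image_of_mem g (mem_univ x))⟩

end Compact

section Integral

variable {α E : Type*} [MeasurableSpace α] [NormedAddCommGroup E]
  {μ : Measure α} {T : α → α} {g : α → E}

theorem MeasureTheory.MeasurePreserving.integrable_birkhoffSum (hT : MeasurePreserving T μ μ)
    (hg : Integrable g μ) (n : ℕ) : Integrable (birkhoffSum T g n) μ := by
  unfold birkhoffSum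
  exact integrable_finsetSum _ fun i _ => (hT.iterate i).integrable_comp_of_integrable hg

theorem MeasureTheory.MeasurePreserving.integral_birkhoffSum [NormedSpace ℝ E]
    (hT : MeasurePreserving T μ μ) (hg : Integrable g μ) (n : ℕ) : ∫ x, birkhoffSum T g n x ∂μ = n • ∫ x, g x ∂μ := by
  unfold birkhoffSum
  rw [integral_finsetSum _ (f := fun i x => g (T^[i] x))
    fun i _ => (hT.iterate i).integrable_comp_of_integrable hg]
  have (i : ℕ) : ∫ x, g (T^[i] x) ∂μ = ∫ x, g x ∂μ := by
    rw [← integral_map (hT.iterate i).measurable.aemeasurable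
      (by rw [(hT.iterate i).map_eq]; exact hg.aestronglyMeasurable), (hT.iterate i).map_eq]
  simp [this]

end Integral

theorem exists_forall_birkhoffSum_nonneg {Ω : Type*} [TopologicalSpace Ω] [CompactSpace Ω]
    [MeasurableSpace Ω] {μ : Measure Ω} [IsProbabilityMeasure μ] {T : Ω → Ω} {g : Ω → ℝ}
    (hTc : Continuous T) (hT : MeasurePreserving T μ μ) (hg : UpperSemicontinuous g)
    (hgi : Integrable g μ) (hg0 : 0 ≤ ∫ x, g x ∂μ) :
    ∃ x, ∀ n, 0 ≤ birkhoffSum T g n x := by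
  let A : ℕ → Set Ω := fun n => ⋂ k ≤ n, {x | 0 ≤ birkhoffSum T g k x}
  have hA_closed (n : ℕ) : IsClosed (A n) :=
    isClosed_biInter fun k _ => (hg.birkhoffSum hTc k).isClosed_preimage 0
  suffices hA : ∀ n, (A n).Nonempty by
    obtain ⟨x, hx⟩ := IsCompact.nonempty_iInter_of_sequence_nonempty_isCompact_isClosed A
      (fun n => biInter_subset_biInter_left fun k hk => Nat.le_succ_of_le hk) hA
      (hA_closed 0).isCompact hA_closed
    exact ⟨x, fun n => mem_iInter₂.1 (mem_iInter.1 hx n) n le_rfl⟩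
  intro n
  by_contra! hempty
  have hneg (x : Ω) : ∃ k, birkhoffSum T g k x < 0 := by
    by_contra! h
    exact hempty.subset (mem_iInter₂.2 fun k _ => h k) |>.elim
  obtain ⟨N, δ, hδ, hdrop⟩ :=
    exists_forall_exists_le_neg_of_upperSemicontinuous (hg.birkhoffSum hTc) hneg
  obtain ⟨B, hB⟩ := hg.exists_forall_le
  obtain ⟨L, hL⟩ := exists_nat_gt (N * (N * max B 0 + δ) / δ)
  obtain ⟨x, hx⟩ := exists_integral_le (hT.integrable_birkhoffSum hgi L)
  have hdrift := mul_le_of_forall_exists_birkhoffSum_le_neg (le_max_right B 0) hδ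
    (fun x => (hB x).trans (le_max_left B 0)) hdrop L x
  rw [hT.integral_birkhoffSum hgi, nsmul_eq_mul] at hx
  have hS : 0 ≤ birkhoffSum T g L x := (mul_nonneg L.cast_nonneg hg0).trans hx
  rw [div_lt_iff₀ hδ] at hL
  nlinarith [mul_nonneg (Nat.cast_nonneg (α := ℝ) N) hS]

theorem heavy_set_nat_nonempty_general
    {Ω : Type*} [TopologicalSpace Ω] [CompactSpace Ω] [MeasurableSpace Ω]
    (μ : Measure Ω) [IsProbabilityMeasure μ]
    (T : Ω → Ω) (hTc : Continuous T) (hT : MeasurePreserving T μ μ)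
    (f : Ω → ℝ) (hf : UpperSemicontinuous f) (hfi : Integrable f μ) :
    ∃ ω : Ω, ∀ n : ℕ,
      (n : ℝ) * ∫ x, f x ∂μ ≤ ∑ i ∈ Finset.range n, f (T^[i] ω) := by
  set a := ∫ x, f x ∂μ
  obtain ⟨ω, hω⟩ := exists_forall_birkhoffSum_nonneg (g := fun x => f x + -a) hTc hT
    (hf.add continuous_const.upperSemicontinuous) (hfi.add (integrable_const _))
    (by rw [integral_add hfi (integrable_const _)]; simp [a])
  refine ⟨ω, fun n => ?_⟩
  have := hω n
  simp only [birkhoffSum, Finset.sum_add_distrib, Finset.sum_const, Finset.card_range,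
    nsmul_eq_mul] at this
  linarith

/-- For a continuous measure-preserving map `T` of a compact probability
space and an upper semicontinuous integrable `f`, the heavy set `H_T^f(ℕ)` is nonempty. -/
theorem heavy_set_nat_nonempty
    {Ω : Type*} [TopologicalSpace Ω] [CompactSpace Ω] [MeasurableSpace Ω] [BorelSpace Ω]
    (μ : Measure Ω) [IsProbabilityMeasure μ]
    (T : Ω → Ω) (hTc : Continuous T) (hT : MeasurePreserving T μ μ)
    (f : Ω → ℝ) (hf : UpperSemicontinuous f) (hfi : Integrable f μ) :
    ∃ ω : Ω, ∀ n : ℕ,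
      (n : ℝ) * ∫ x, f x ∂μ ≤ ∑ i ∈ Finset.range n, f (T^[i] ω) :=
  heavy_set_nat_nonempty_general μ T hTc hT f hf hfi
end

section
/- (Reversing Principle) Let α ∈ ℝ and let a_0, a_1, …, a_n be real numbers such that the word a_0 … a_{n-1} is α-heavy (i.e. for every i with 1 ≤ i ≤ n, (1/i)∑_{j=0}^{i-1} a_j ≥ α) and such that (1/(n+1))∑_{j=0}^{n} a_j ≤ α. Then the transposed word a_n a_{n-1} … a_0 is α-light: for every i with 1 ≤ i ≤ n+1, (1/i)∑_{j=0}^{i-1} a_{n-j} ≤ α. -/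
/-! The reversed prefix of length `i` is the full word minus its prefix of length `n + 1 - i`.
The full word weighs at most `α (n + 1)` and, by heaviness, that prefix weighs at least
`α (n + 1 - i)`, so the reversed prefix weighs at most `α i`. -/

open Finset

theorem sum_range_reflect_add_sum_range {M : Type*} [AddCommMonoid M] (a : ℕ → M) {n i : ℕ}
    (hi : i ≤ n + 1) :
    ∑ j ∈ range i, a (n - j) + ∑ j ∈ range (n + 1 - i), a j = ∑ j ∈ range (n + 1), a j := by
  have tail_reflect : ∑ k ∈ range (n + 1 - i), a (n - (i + k)) = ∑ j ∈ range (n + 1 - i), a j := by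
    rw [← sum_range_reflect]
    exact sum_congr rfl fun k hk => by rw [mem_range] at hk; congr 1; omega
  rw [← tail_reflect, ← sum_range_add (fun j => a (n - j)), Nat.add_sub_cancel' hi,
    ← sum_range_reflect a (n + 1), Nat.add_sub_cancel]

theorem mul_le_sum_range_of_forall_le_avg {α : ℝ} {n : ℕ} {a : ℕ → ℝ}
    (hheavy : ∀ i : ℕ, 1 ≤ i → i ≤ n → α ≤ (∑ j ∈ range i, a j) / i) {m : ℕ} (hm : m ≤ n) :
    α * m ≤ ∑ j ∈ range m, a j := by
  rcases Nat.eq_zero_or_pos m with rfl | hpos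
  · simp
  · exact (le_div_iff₀ (by exact_mod_cast hpos)).mp (hheavy m hpos hm)

/-- **Reversing Principle.** If `a₀ … a_{n-1}` is `α`-heavy but the full word
`a₀ … a_n` has average weight `≤ α`, then the transposed word `a_n a_{n-1} … a₀` is
`α`-light. -/
theorem reversing_principle (α : ℝ) (n : ℕ) (a : ℕ → ℝ)
    (hheavy : ∀ i : ℕ, 1 ≤ i → i ≤ n → α ≤ (∑ j ∈ Finset.range i, a j) / i)
    (hlight : (∑ j ∈ Finset.range (n + 1), a j) / (n + 1) ≤ α) :
    ∀ i : ℕ, 1 ≤ i → i ≤ n + 1 → (∑ j ∈ Finset.range i, a (n - j)) / i ≤ α := by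
  intro i hi hin
  have split := sum_range_reflect_add_sum_range a hin
  have prefix_heavy := mul_le_sum_range_of_forall_le_avg hheavy (m := n + 1 - i) (by omega)
  have total_light := (div_le_iff₀ (by positivity)).mp hlight
  rw [Nat.cast_sub hin] at prefix_heavy
  push_cast at prefix_heavy
  rw [div_le_iff₀ (by exact_mod_cast hi)]
  linarith
end

section
/- Let X : ℕ → ℝ be a sequence and α ∈ ℝ with liminf_{n→∞} (1/n)∑_{i=0}^{n-1} X(i) = α. Then for every δ < α there exists N ∈ ℕ such that the shifted sequence X(N), X(N+1), X(N+2), … is δ-heavy: for every m ≥ 1, (1/m)∑_{i=0}^{m-1} X(N+i) ≥ δ. -/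
/-!
Fix `δ < δ₁ < α`. Eventually the partial sums satisfy `S n ≥ δ₁ n`, so `S n - δ n → ∞` and
this sequence attains a minimum at some `N`. Minimality gives `S (N + m) - S N ≥ δ m` for all
`m`, which says exactly that the tail starting at `N` is `δ`-heavy.
-/

open Filter Finset

def IsHeavy (δ : ℝ) (Y : ℕ → ℝ) : Prop :=
  ∀ m : ℕ, 1 ≤ m → δ ≤ (∑ i ∈ range m, Y i) / m

lemma isHeavy_shift_of_forall_le {X : ℕ → ℝ} {δ : ℝ} {N : ℕ}
    (hN : ∀ n, ∑ i ∈ range N, X i - δ * N ≤ ∑ i ∈ range n, X i - δ * n) :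
    IsHeavy δ (fun i => X (N + i)) := by
  intro m hm
  have hmin := hN (N + m)
  rw [sum_range_add] at hmin
  push_cast at hmin
  rw [le_div_iff₀ (by exact_mod_cast hm)]
  linarith

lemma tendsto_sub_mul_atTop_of_eventually_lt_div {a : ℕ → ℝ} {δ δ₁ : ℝ} (hδ : δ < δ₁)
    (ha : ∀ᶠ n : ℕ in atTop, δ₁ < a n / n) :
    Tendsto (fun n : ℕ => a n - δ * n) atTop atTop := by
  have hlin : Tendsto (fun n : ℕ => (δ₁ - δ) * n) atTop atTop :=
    tendsto_natCast_atTop_atTop.const_mul_atTop (sub_pos.2 hδ)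
  refine tendsto_atTop_mono' _ ?_ hlin
  filter_upwards [ha, eventually_gt_atTop 0] with n hn hn0
  rw [lt_div_iff₀ (by exact_mod_cast hn0)] at hn
  linarith

/-- If the averages of a real sequence `X` have `liminf` equal to `α`
(in the extended reals), then for every `δ < α` some tail shift of `X` is `δ`-heavy. -/
theorem exists_delta_heavy_tail (X : ℕ → ℝ) (α : ℝ)
    (h : Filter.atTop.liminf
        (fun n : ℕ => (((∑ i ∈ Finset.range n, X i) / n : ℝ) : EReal)) = (α : EReal)) :
    ∀ δ : ℝ, δ < α → ∃ N : ℕ, ∀ m : ℕ, 1 ≤ m →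
      δ ≤ (∑ i ∈ Finset.range m, X (N + i)) / m := by
  intro δ hδ
  obtain ⟨δ₁, hδδ₁, hδ₁α⟩ := exists_between hδ
  have hev : ∀ᶠ n : ℕ in atTop, δ₁ < (∑ i ∈ range n, X i) / n := by
    have hlt : (δ₁ : EReal) < atTop.liminf
        (fun n : ℕ => (((∑ i ∈ range n, X i) / n : ℝ) : EReal)) := by
      rw [h]; exact_mod_cast hδ₁α
    filter_upwards [eventually_lt_of_lt_liminf hlt] with n hn
    exact_mod_cast hn
  have htends := tendsto_sub_mul_atTop_of_eventually_lt_div hδδ₁ hev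
  obtain ⟨N, hN⟩ := (Nat.cofinite_eq_atTop ▸ htends).exists_forall_le
  exact ⟨N, isHeavy_shift_of_forall_le hN⟩
end

section
/- Let s ⊆ ℝ be nonempty and well-ordered by ≥ (s contains no infinite strictly increasing sequence), and let X : ℕ → ℝ be a sequence taking values in s, with upper Banach density d_B*(X) (taken in the extended reals). Then X contains arbitrarily long d_B*(X)-heavy factors: for every L ∈ ℕ there exist j ∈ ℕ and n ≥ L such that for every i with 1 ≤ i ≤ n, the average (1/i)∑_{k=0}^{i-1} X(j+k), viewed as an extended real, is ≥ d_B*(X). -/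
/-!
Since `s` is well-ordered by `≥`, `X` is bounded above, and the sums of `i` elements of `s` form
a set well-ordered by `≥`. If the claim failed for some `L`, every position would start a block of
length at most `n = max L 1` whose average is below `c = d_B*(X)`; by well-ordering, the deficit
`i * c - ∑` of such a block is at least some uniform `δ > 0`. Tiling a long window greedily by
these blocks shows that its average is at most `c - δ / n` up to an error that vanishes as the
window grows, so `d_B*(X) ≤ c - δ / n < c`.
-/

/-- The upper Banach density of a sequence `X : ℕ → ℝ`, computed in the extended reals:
`d_B*(X) = lim_{N→∞} sup { (1/(b-a)) ∑_{i=a}^{b-1} X i : a < b, b - a ≥ N }`.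
Since the suprema are antitone in `N`, the limit equals the infimum over `N`. -/
noncomputable def upperBanachDensity (X : ℕ → ℝ) : EReal :=
  ⨅ N : ℕ, sSup {x : EReal | ∃ a b : ℕ, a < b ∧ N ≤ b - a ∧
    x = (((∑ i ∈ Finset.Ico a b, X i) / (b - a) : ℝ) : EReal)}

open Finset Pointwise

theorem Set.IsWF.nsmul {α : Type*} [AddCommMonoid α] [LinearOrder α] [IsOrderedCancelAddMonoid α]
    {t : Set α} (ht : t.IsWF) : ∀ n : ℕ, (n • t).IsWF
  | 0 => by rw [zero_nsmul]; exact Set.isWF_singleton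
  | n + 1 => by rw [succ_nsmul]; exact (ht.nsmul n).add ht

theorem Set.sum_range_mem_nsmul {α : Type*} [AddCommMonoid α] {t : Set α} {g : ℕ → α}
    (hg : ∀ k, g k ∈ t) (n : ℕ) : ∑ k ∈ Finset.range n, g k ∈ n • t := by
  simpa using (Set.mem_finsetSum (Finset.range n) (fun _ ↦ t) _).2 ⟨g, fun _ ↦ hg _, rfl⟩

theorem Set.IsWF.exists_forall_lt_imp_le {α : Type*} [LinearOrder α] [NoMaxOrder α] {D : Set α}
    (hD : D.IsWF) (a : α) : ∃ δ, a < δ ∧ ∀ x ∈ D, a < x → δ ≤ x := by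
  by_cases h : (D ∩ Set.Ioi a).Nonempty
  · have hD' : (D ∩ Set.Ioi a).IsWF := hD.mono Set.inter_subset_left
    exact ⟨hD'.min h, (hD'.min_mem h).2, fun x hx hax ↦ hD'.min_le h ⟨hx, hax⟩⟩
  · obtain ⟨δ, hδ⟩ := exists_gt a
    exact ⟨δ, hδ, fun x hx hax ↦ (h ⟨x, hx, hax⟩).elim⟩

theorem isWF_neg_of_not_exists_strictMono {α : Type*} [AddCommGroup α] [LinearOrder α]
    [IsOrderedAddMonoid α] {s : Set α} (h : ¬ ∃ u : ℕ → α, (∀ i, u i ∈ s) ∧ StrictMono u) :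
    (-s).IsWF := by
  rw [Set.isWF_iff_no_descending_seq]
  exact fun f hf hmem ↦ h ⟨fun n ↦ -f n, hmem, hf.neg⟩

section Blocks

variable {X : ℕ → ℝ} {M c : ℝ} {L : ℕ}

theorem sum_range_le_of_forall_exists_block (hM : ∀ k, X k ≤ M)
    (hblock : ∀ j, ∃ i, 1 ≤ i ∧ i ≤ L ∧ ∑ k ∈ range i, X (j + k) ≤ i * c) (a m : ℕ) :
    ∑ k ∈ range m, X (a + k) ≤ m * c + L * max (M - c) 0 := by
  induction m using Nat.strong_induction_on generalizing a with
  | _ m ih =>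
    obtain ⟨i, hi1, hiL, hi⟩ := hblock a
    by_cases him : i ≤ m
    · obtain ⟨r, rfl⟩ := Nat.exists_eq_add_of_le him
      have hr := ih r (by omega) (a + i)
      simp only [add_assoc] at hr
      rw [sum_range_add]
      push_cast
      linarith
    · have hmL : (m : ℝ) ≤ L := by exact_mod_cast (by omega : m ≤ L)
      calc ∑ k ∈ range m, X (a + k) ≤ ∑ _k ∈ range m, M := sum_le_sum fun k _ ↦ hM _
        _ = m * c + m * (M - c) := by simp; ring
        _ ≤ m * c + L * max (M - c) 0 := by
          gcongr m * c + ?_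
          exact (mul_le_mul_of_nonneg_left (le_max_left _ _) m.cast_nonneg).trans
            (mul_le_mul_of_nonneg_right hmL (le_max_right _ _))

theorem upperBanachDensity_le_of_forall_exists_block (hM : ∀ k, X k ≤ M)
    (hblock : ∀ j, ∃ i, 1 ≤ i ∧ i ≤ L ∧ ∑ k ∈ range i, X (j + k) ≤ i * c) :
    upperBanachDensity X ≤ c := by
  refine EReal.le_of_forall_lt_iff_le.1 fun r hr ↦ ?_
  have hcr : c < r := EReal.coe_lt_coe_iff.1 hr
  set K := (L : ℝ) * max (M - c) 0
  obtain ⟨N, hN⟩ := exists_nat_gt (K / (r - c))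
  refine (iInf_le _ N).trans (sSup_le ?_)
  rintro _ ⟨a, b, hab, hNba, rfl⟩
  refine EReal.coe_le_coe_iff.2 ?_
  have hlen : ((b - a : ℕ) : ℝ) = b - a := Nat.cast_sub hab.le
  have hNlen : (N : ℝ) ≤ b - a := hlen ▸ Nat.cast_le.2 hNba
  have hK : K < (b - a) * (r - c) := by
    rw [div_lt_iff₀ (sub_pos.2 hcr)] at hN
    nlinarith
  rw [div_le_iff₀ (by simpa using hab), sum_Ico_eq_sum_range]
  have := sum_range_le_of_forall_exists_block hM hblock a (b - a)
  rw [hlen] at this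
  linarith

end Blocks

theorem exists_pos_forall_sum_lt_mul_imp_le {s : Set ℝ} (hwf : (-s).IsWF) {X : ℕ → ℝ}
    (hX : ∀ i, X i ∈ s) (c : ℝ) (n : ℕ) :
    ∃ δ > 0, ∀ j i, i ≤ n → ∑ k ∈ range i, X (j + k) < i * c →
      ∑ k ∈ range i, X (j + k) ≤ i * c - δ := by
  set D := ⋃ i ∈ range (n + 1), i • ({c} - s)
  have hD : D.IsWF := (Finset.wellFoundedOn_bUnion _).2 fun i _ ↦
    ((Set.isWF_singleton.add hwf).mono (by rw [sub_eq_add_neg])).nsmul i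
  obtain ⟨δ, hδ, hδD⟩ := hD.exists_forall_lt_imp_le 0
  refine ⟨δ, hδ, fun j i hin hi ↦ ?_⟩
  have hmem : ∑ k ∈ range i, (c - X (j + k)) ∈ D :=
    Set.mem_biUnion (mem_range.2 (Nat.lt_succ_of_le hin))
      (Set.sum_range_mem_nsmul (fun k ↦ Set.sub_mem_sub (Set.mem_singleton c) (hX _)) i)
  have hdeficit : ∑ k ∈ range i, (c - X (j + k)) = i * c - ∑ k ∈ range i, X (j + k) := by simp
  have := hδD _ hmem (by linarith)
  linarith

theorem arbitrarily_long_banach_heavy_factors_general (s : Set ℝ)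
    (hwo : ¬ ∃ u : ℕ → ℝ, (∀ i, u i ∈ s) ∧ StrictMono u)
    (X : ℕ → ℝ) (hX : ∀ i, X i ∈ s) :
    ∀ L : ℕ, ∃ j n : ℕ, L ≤ n ∧ ∀ i : ℕ, 1 ≤ i → i ≤ n →
      upperBanachDensity X ≤ (((∑ k ∈ Finset.range i, X (j + k)) / i : ℝ) : EReal) := by
  intro L
  have hwf : (-s).IsWF := isWF_neg_of_not_exists_strictMono hwo
  have hne : (-s).Nonempty := ⟨-X 0, by simpa using hX 0⟩
  set M := -hwf.min hne
  have hM : ∀ k, X k ≤ M := fun k ↦ le_neg.2 (hwf.min_le hne (by simpa using hX k))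
  have hd_le_M : upperBanachDensity X ≤ M :=
    upperBanachDensity_le_of_forall_exists_block hM fun j ↦ ⟨1, le_rfl, le_rfl, by simpa using hM j⟩
  rcases eq_bot_or_bot_lt (upperBanachDensity X) with hbot | hbot
  · exact ⟨0, L, le_rfl, fun _ _ _ ↦ hbot ▸ bot_le⟩
  set c := (upperBanachDensity X).toReal
  have hc : upperBanachDensity X = c :=
    (EReal.coe_toReal (ne_top_of_le_ne_top (EReal.coe_ne_top M) hd_le_M) hbot.ne').symm
  by_contra! hlight
  set n := max L 1
  have hn : (0 : ℝ) < n := by exact_mod_cast (by omega : 0 < n)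
  obtain ⟨δ, hδ, hgap⟩ := exists_pos_forall_sum_lt_mul_imp_le hwf hX c n
  have hblock : ∀ j, ∃ i, 1 ≤ i ∧ i ≤ n ∧ ∑ k ∈ range i, X (j + k) ≤ i * (c - δ / n) := by
    intro j
    obtain ⟨i, hi1, hin, hi⟩ := hlight j n (le_max_left _ _)
    rw [hc, EReal.coe_lt_coe_iff, div_lt_iff₀ (by exact_mod_cast hi1)] at hi
    have hin' : (i : ℝ) * (δ / n) ≤ δ := calc
      (i : ℝ) * (δ / n) ≤ n * (δ / n) := by gcongr
      _ = δ := mul_div_cancel₀ _ hn.ne'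
    exact ⟨i, hi1, hin, by linarith [hgap j i hin (by linarith)]⟩
  have := upperBanachDensity_le_of_forall_exists_block hM hblock
  rw [hc, EReal.coe_le_coe_iff] at this
  linarith [div_pos hδ hn]

/-- If `s ⊆ ℝ` is nonempty and well-ordered by `≥`, then every sequence
with values in `s` contains arbitrarily long `d_B*(X)`-heavy factors. -/
theorem arbitrarily_long_banach_heavy_factors (s : Set ℝ) (hne : s.Nonempty)
    (hwo : ¬ ∃ u : ℕ → ℝ, (∀ i, u i ∈ s) ∧ StrictMono u)
    (X : ℕ → ℝ) (hX : ∀ i, X i ∈ s) :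
    ∀ L : ℕ, ∃ j n : ℕ, L ≤ n ∧ ∀ i : ℕ, 1 ≤ i → i ≤ n →
      upperBanachDensity X ≤ (((∑ k ∈ Finset.range i, X (j + k)) / i : ℝ) : EReal) :=
  arbitrarily_long_banach_heavy_factors_general s hwo X hX
end

section
/- Let s ⊆ ℝ be a set that is not well-ordered by ≥, i.e. there exists a strictly increasing sequence α_0 < α_1 < α_2 < … of elements of s. Then there exists a sequence X : ℕ → ℝ taking values in s (namely X(i) = α_i) such that X has no d_B*(X)-heavy factor of any positive length: for every j ∈ ℕ and every n ≥ 1 there is some i with 1 ≤ i ≤ n such that the average (1/i)∑_{k=0}^{i-1} X(j+k), viewed as an extended real, is < d_B*(X). -/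
/-! Take `X = α`. The one-letter prefix of the factor starting at `j` has average `α j`, whereas
every window starting at `j + 1` has average at least `α (j + 1)`, so
`α j < α (j + 1) ≤ d_B*(α)`. -/

open Finset

theorem le_sum_Ico_div_of_le {X : ℕ → ℝ} {c : ℝ} {a b : ℕ} (hab : a < b)
    (h : ∀ i ∈ Ico a b, c ≤ X i) : c ≤ (∑ i ∈ Ico a b, X i) / ((b : ℝ) - a) := by
  have hlen : ((b : ℝ) - a) = (#(Ico a b) : ℝ) := by
    rw [Nat.card_Ico, Nat.cast_sub hab.le]
  rw [hlen, le_div_iff₀ (by simpa using hab), mul_comm, ← nsmul_eq_mul]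
  exact card_nsmul_le_sum _ _ _ h

theorem le_upperBanachDensity_of_forall_le {X : ℕ → ℝ} {c : ℝ} {j : ℕ}
    (h : ∀ i, j ≤ i → c ≤ X i) : (c : EReal) ≤ upperBanachDensity X :=
  le_iInf fun N => le_sSup_of_le ⟨j, j + (N + 1), by omega, by omega, rfl⟩ <|
    EReal.coe_le_coe_iff.2 <| le_sum_Ico_div_of_le (by omega) fun i hi => h i (mem_Ico.1 hi).1

theorem coe_lt_upperBanachDensity_of_strictMono {X : ℕ → ℝ} (hX : StrictMono X) (j : ℕ) :
    (X j : EReal) < upperBanachDensity X :=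
  (EReal.coe_lt_coe_iff.2 (hX j.lt_succ_self)).trans_le <|
    le_upperBanachDensity_of_forall_le fun _ hi => hX.monotone hi

/-- If `s ⊆ ℝ` is not well-ordered by `≥`, witnessed by a strictly
increasing sequence `α` in `s`, then there is a sequence `X` with values in `s`
(namely `X i = α i`) having no `d_B*(X)`-heavy factor of any positive length. -/
theorem no_banach_heavy_factors_of_not_well_ordered
    (s : Set ℝ) (α : ℕ → ℝ) (hα : ∀ i, α i ∈ s) (hmono : StrictMono α) :
    ∃ X : ℕ → ℝ, (∀ i, X i ∈ s) ∧
      ∀ j n : ℕ, 1 ≤ n → ∃ i : ℕ, 1 ≤ i ∧ i ≤ n ∧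
        (((∑ k ∈ Finset.range i, X (j + k)) / i : ℝ) : EReal) < upperBanachDensity X := by
  refine ⟨α, hα, fun j n hn => ⟨1, le_rfl, hn, ?_⟩⟩
  simpa using coe_lt_upperBanachDensity_of_strictMono hmono j
end

section
/- Let s ⊆ ℝ be a nonempty compact set which is well-ordered by ≥ (contains no infinite strictly increasing sequence), and let X : ℕ → s. Then, with σ the shift map on sequences (σ(Y)(n) = Y(n+1)) and the product topology on ℝ^ℕ, the closure of the forward orbit {σ^n X : n ∈ ℕ} contains a sequence X' which is d_B*(X)-heavy: for every n ≥ 1, (1/n)∑_{i=0}^{n-1} X'(i) ≥ d_B*(X). -/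
open Finset

lemma exists_sum_Ico_le_sum_Ico_and_forall_nonneg (g : ℕ → ℝ) {a b : ℕ} (hab : a ≤ b) :
    ∃ c ∈ Icc a b, ∑ i ∈ Ico a b, g i ≤ ∑ i ∈ Ico c b, g i ∧
      ∀ j ∈ Icc c b, 0 ≤ ∑ i ∈ Ico c j, g i := by
  -- `c` minimises the prefix sums `∑ i ∈ Ico a j, g i` over `j ∈ Icc a b`.
  obtain ⟨c, hc, hmin⟩ := (Icc a b).exists_min_image (fun j => ∑ i ∈ Ico a j, g i)
    ⟨a, left_mem_Icc.mpr hab⟩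
  have hac := (mem_Icc.mp hc).1
  have split : ∀ j, c ≤ j → ∑ i ∈ Ico c j, g i = ∑ i ∈ Ico a j, g i - ∑ i ∈ Ico a c, g i :=
    fun j hcj => eq_sub_of_add_eq' (sum_Ico_consecutive g hac hcj)
  refine ⟨c, hc, ?_, fun j hj => ?_⟩
  · have := hmin a (left_mem_Icc.mpr hab)
    rw [Ico_self, sum_empty] at this
    rw [split b (mem_Icc.mp hc).2]
    linarith
  · rw [split j (mem_Icc.mp hj).1, sub_nonneg]
    exact hmin j (mem_Icc.mpr ⟨hac.trans (mem_Icc.mp hj).1, (mem_Icc.mp hj).2⟩)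

lemma exists_window_of_lt_upperBanachDensity {X : ℕ → ℝ} {t : ℝ}
    (ht : (t : EReal) < upperBanachDensity X) (N : ℕ) :
    ∃ a b : ℕ, a < b ∧ N ≤ b - a ∧ ((b : ℝ) - a) * t < ∑ i ∈ Ico a b, X i := by
  obtain ⟨_, ⟨a, b, hab, hN, rfl⟩, hlt⟩ := lt_sSup_iff.mp (ht.trans_le (iInf_le _ N))
  have hpos : (0 : ℝ) < b - a := sub_pos.mpr (Nat.cast_lt.mpr hab)
  exact ⟨a, b, hab, hN, by rwa [EReal.coe_lt_coe_iff, lt_div_iff₀' hpos] at hlt⟩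

def prefixHeavy (t : ℝ) (n : ℕ) : Set (ℕ → ℝ) :=
  {Y | ∀ j ≤ n, (j : ℝ) * t ≤ ∑ i ∈ range j, Y i}

lemma isClosed_prefixHeavy (t : ℝ) (n : ℕ) : IsClosed (prefixHeavy t n) := by
  simp only [prefixHeavy, Set.ofPred_forall]
  exact isClosed_iInter fun j => isClosed_iInter fun _ =>
    isClosed_le continuous_const (continuous_finsetSum _ fun i _ => continuous_apply i)

lemma prefixHeavy_anti {t t' : ℝ} {n n' : ℕ} (ht : t ≤ t') (hn : n ≤ n') :
    prefixHeavy t' n' ⊆ prefixHeavy t n :=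
  fun _ hY j hj => (mul_le_mul_of_nonneg_left ht j.cast_nonneg).trans (hY j (hj.trans hn))

lemma exists_shift_mem_prefixHeavy {X : ℕ → ℝ} {M t : ℝ} (hM : ∀ i, X i ≤ M)
    (ht : (t : EReal) < upperBanachDensity X) (n : ℕ) :
    ∃ c, (fun k => X (c + k)) ∈ prefixHeavy t n := by
  -- The excess `(b - a) * (t' - t)` of the window over `t` survives on `Ico c b`, where it is at
  -- most `(b - c) * (M - t)`; the window length `N` is chosen so that this forces `n < b - c`.
  obtain ⟨t', htt', ht'⟩ := EReal.lt_iff_exists_real_btwn.mp ht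
  rw [EReal.coe_lt_coe_iff] at htt'
  obtain ⟨a, b, hab, hN, hwin⟩ :=
    exists_window_of_lt_upperBanachDensity ht' ⌈n * (M - t) / (t' - t)⌉₊
  have sum_sub : ∀ c d, c ≤ d → ∑ i ∈ Ico c d, (X i - t) = ∑ i ∈ Ico c d, X i - (d - c) * t :=
    fun c d h => by simp [sum_sub_distrib, Nat.cast_sub h]
  have sum_le : ∀ c d, c ≤ d → ∑ i ∈ Ico c d, X i ≤ (d - c) * M := fun c d h => by
    simpa [Nat.cast_sub h] using sum_le_card_nsmul (Ico c d) X M (fun i _ => hM i)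
  obtain ⟨c, hc, hac, hheavy⟩ :=
    exists_sum_Ico_le_sum_Ico_and_forall_nonneg (fun i => X i - t) hab.le
  have hMt : 0 < M - t := by
    have : (0 : ℝ) < b - a := sub_pos.mpr (Nat.cast_lt.mpr hab)
    nlinarith [sum_le a b hab.le]
  have hlen : (n : ℝ) < b - c := by
    have hN' : (n * (M - t) / (t' - t) : ℝ) ≤ b - a := by
      refine (Nat.le_ceil _).trans ?_
      exact_mod_cast (Nat.cast_le.mpr hN).trans (Nat.cast_sub hab.le).le
    rw [div_le_iff₀ (sub_pos.mpr htt')] at hN'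
    nlinarith [sum_sub a b hab.le, sum_sub c b (mem_Icc.mp hc).2, sum_le c b (mem_Icc.mp hc).2]
  refine ⟨c, fun j hj => ?_⟩
  have hcj : c + j ≤ b := by
    have : (c : ℝ) + j < b := by linarith [(Nat.cast_le (α := ℝ)).mpr hj]
    exact_mod_cast this.le
  have := hheavy (c + j) (mem_Icc.mpr ⟨le_self_add, hcj⟩)
  rw [sum_Ico_eq_sum_range, add_tsub_cancel_left, sum_sub_distrib] at this
  simpa [sub_nonneg, mul_comm] using this

lemma isCompact_closure_range_shift {s : Set ℝ} (hs : IsCompact s) {X : ℕ → ℝ}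
    (hX : ∀ i, X i ∈ s) : IsCompact (closure (Set.range fun m : ℕ => fun k : ℕ => X (m + k))) :=
  (isCompact_univ_pi fun _ => hs).closure_of_subset <| by
    rintro _ ⟨m, rfl⟩ k -
    exact hX (m + k)

theorem orbit_closure_contains_banach_heavy_sequence_general
    (s : Set ℝ) (hcpt : IsCompact s)
    (X : ℕ → ℝ) (hX : ∀ i, X i ∈ s) :
    ∃ X' ∈ closure (Set.range fun m : ℕ => fun k : ℕ => X (m + k)),
      ∀ n : ℕ, 1 ≤ n →
        upperBanachDensity X ≤ (((∑ i ∈ Finset.range n, X' i) / n : ℝ) : EReal) := by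
  set O := closure (Set.range fun m : ℕ => fun k : ℕ => X (m + k))
  rcases eq_or_ne (upperBanachDensity X) ⊥ with hbot | hbot
  · exact ⟨X, subset_closure ⟨0, by simp⟩, fun n _ => hbot ▸ bot_le⟩
  obtain ⟨M, hM⟩ := hcpt.bddAbove
  obtain ⟨t₀, -, ht₀⟩ := EReal.lt_iff_exists_real_btwn.mp (bot_lt_iff_ne_bot.mpr hbot)
  let ι := {t : ℝ // (t : EReal) < upperBanachDensity X} × ℕ
  have : Nonempty ι := ⟨(⟨t₀, ht₀⟩, 0)⟩
  have hne : ∀ p : ι, (O ∩ prefixHeavy p.1 p.2).Nonempty := fun p => by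
    obtain ⟨c, hc⟩ := exists_shift_mem_prefixHeavy (fun i => hM (hX i)) p.1.2 p.2
    exact ⟨_, subset_closure ⟨c, rfl⟩, hc⟩
  obtain ⟨Y, hY⟩ := IsCompact.nonempty_iInter_of_directed_nonempty_isCompact_isClosed
    (fun p : ι => O ∩ prefixHeavy p.1 p.2)
    (Antitone.directed_ge fun _ _ h =>
      Set.inter_subset_inter_right _ (prefixHeavy_anti (Prod.le_def.mp h).1 (Prod.le_def.mp h).2))
    hne (fun _ => (isCompact_closure_range_shift hcpt hX).inter_right (isClosed_prefixHeavy _ _))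
    (fun _ => isClosed_closure.inter (isClosed_prefixHeavy _ _))
  rw [Set.mem_iInter] at hY
  refine ⟨Y, (hY (⟨t₀, ht₀⟩, 0)).1, fun n hn => EReal.ge_of_forall_gt_iff_ge.mp fun t ht => ?_⟩
  rw [EReal.coe_le_coe_iff, le_div_iff₀ (by exact_mod_cast hn), mul_comm]
  exact (hY (⟨t, ht⟩, n)).2 n le_rfl

/-- If `s ⊆ ℝ` is nonempty, compact and well-ordered by `≥`, and `X` takes
values in `s`, then the closure of the forward shift-orbit of `X` (in the product topology
on `ℝ^ℕ`) contains a `d_B*(X)`-heavy sequence. -/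
theorem orbit_closure_contains_banach_heavy_sequence
    (s : Set ℝ) (hne : s.Nonempty) (hcpt : IsCompact s)
    (hwo : ¬ ∃ u : ℕ → ℝ, (∀ i, u i ∈ s) ∧ StrictMono u)
    (X : ℕ → ℝ) (hX : ∀ i, X i ∈ s) :
    ∃ X' ∈ closure (Set.range fun m : ℕ => fun k : ℕ => X (m + k)),
      ∀ n : ℕ, 1 ≤ n →
        upperBanachDensity X ≤ (((∑ i ∈ Finset.range n, X' i) / n : ℝ) : EReal) :=
  orbit_closure_contains_banach_heavy_sequence_general s hcpt X hX
end

section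
/- Let A and B be nonempty finite words of real numbers, each of which is locally heavy. Then the concatenation AB is locally heavy if and only if w̄(A) ≥ w̄(B), where w̄ denotes average weight. -/
/-! The average weight of a concatenation is the mediant of the averages of its parts, so it
lies between them. A prefix of `A ++ B` ending inside `A` is handled by `w̄(A ++ B) ≤ w̄(A)`.
A longer prefix `A ++ B.take j` has average at least `w̄(B)`, being a mediant of two averages
that are both at least `w̄(B)`, while the remaining suffix `B.drop j` has average at most `w̄(B)`
because `B` is locally heavy; the mediant inequality then gives
`w̄(A ++ B) ≤ w̄(A ++ B.take j)`. -/

/-- A finite word of reals is locally heavy if every nonempty prefix has average weight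
at least the average weight of the whole word. -/
def LocallyHeavy (A : List ℝ) : Prop :=
  ∀ i : ℕ, 1 ≤ i → i ≤ A.length → A.sum / A.length ≤ (A.take i).sum / i

section Mediant

variable {K : Type*} [Field K] [LinearOrder K] [IsStrictOrderedRing K] {a b c m n : K}

theorem add_div_add_le_div_left_iff (hm : 0 < m) (hn : 0 < n) :
    (a + b) / (m + n) ≤ a / m ↔ b / n ≤ a / m := by
  rw [div_le_div_iff₀ (by positivity) hm, div_le_div_iff₀ hn hm]
  constructor <;> intro h <;> linarith

theorem div_le_add_div_add_iff (hm : 0 < m) (hn : 0 < n) :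
    b / n ≤ (a + b) / (m + n) ↔ b / n ≤ a / m := by
  rw [div_le_div_iff₀ hn (by positivity), div_le_div_iff₀ hn hm]
  constructor <;> intro h <;> linarith

theorem le_add_div_add (hm : 0 < m) (hn : 0 < n) (hca : c ≤ a / m) (hcb : c ≤ b / n) :
    c ≤ (a + b) / (m + n) := by
  rw [le_div_iff₀ hm] at hca
  rw [le_div_iff₀ hn] at hcb
  rw [le_div_iff₀ (by positivity)]
  linarith

end Mediant

noncomputable def avgWeight (A : List ℝ) : ℝ :=
  A.sum / A.length

section AvgWeight

variable {A B : List ℝ}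

theorem avgWeight_append :
    avgWeight (A ++ B) = (A.sum + B.sum) / ((A.length : ℝ) + B.length) := by
  simp [avgWeight]

theorem avgWeight_append_le_left_iff (hA : A ≠ []) (hB : B ≠ []) :
    avgWeight (A ++ B) ≤ avgWeight A ↔ avgWeight B ≤ avgWeight A := by
  rw [avgWeight_append]
  exact add_div_add_le_div_left_iff (by simpa [List.length_pos_iff])
    (by simpa [List.length_pos_iff])

theorem avgWeight_le_append_iff (hA : A ≠ []) (hB : B ≠ []) :
    avgWeight B ≤ avgWeight (A ++ B) ↔ avgWeight B ≤ avgWeight A := by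
  rw [avgWeight_append]
  exact div_le_add_div_add_iff (by simpa [List.length_pos_iff])
    (by simpa [List.length_pos_iff])

theorem le_avgWeight_append {c : ℝ} (hA : A ≠ []) (hB : B ≠ []) (hcA : c ≤ avgWeight A)
    (hcB : c ≤ avgWeight B) : c ≤ avgWeight (A ++ B) := by
  rw [avgWeight_append]
  exact le_add_div_add (by simpa [List.length_pos_iff]) (by simpa [List.length_pos_iff]) hcA hcB

end AvgWeight

section LocallyHeavy

variable {A B : List ℝ}

theorem locallyHeavy_iff_avgWeight_le_take :
    LocallyHeavy A ↔ ∀ i, 1 ≤ i → i ≤ A.length → avgWeight A ≤ avgWeight (A.take i) := by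
  refine forall_congr' fun i => forall_congr' fun _ => forall_congr' fun hi => ?_
  simp [avgWeight, List.length_take, min_eq_left hi]

theorem LocallyHeavy.avgWeight_drop_le (h : LocallyHeavy B) {j : ℕ} (hj : j < B.length) :
    avgWeight (B.drop j) ≤ avgWeight B := by
  rcases Nat.eq_zero_or_pos j with rfl | hj₀
  · simp
  have hT : B.take j ≠ [] := by rw [← List.length_pos_iff, List.length_take]; omega
  have hD : B.drop j ≠ [] := by rw [← List.length_pos_iff, List.length_drop]; omega
  have hle : avgWeight (B.take j ++ B.drop j) ≤ avgWeight (B.take j) := by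
    rw [List.take_append_drop]
    exact locallyHeavy_iff_avgWeight_le_take.1 h j hj₀ hj.le
  have := (avgWeight_le_append_iff hT hD).2 ((avgWeight_append_le_left_iff hT hD).1 hle)
  rwa [List.take_append_drop] at this

theorem avgWeight_append_le_append_take (hA : A ≠ []) (hBh : LocallyHeavy B)
    (hBA : avgWeight B ≤ avgWeight A) {j : ℕ} (hj₀ : 1 ≤ j) (hj : j ≤ B.length) :
    avgWeight (A ++ B) ≤ avgWeight (A ++ B.take j) := by
  rcases hj.eq_or_lt with rfl | hj
  · simp
  have hT : B.take j ≠ [] := by rw [← List.length_pos_iff, List.length_take]; omega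
  have hP : A ++ B.take j ≠ [] := by simp [hA]
  have hD : B.drop j ≠ [] := by rw [← List.length_pos_iff, List.length_drop]; omega
  have hsplit : A ++ B = (A ++ B.take j) ++ B.drop j := by simp
  rw [hsplit, avgWeight_append_le_left_iff hP hD]
  calc avgWeight (B.drop j) ≤ avgWeight B := hBh.avgWeight_drop_le hj
    _ ≤ avgWeight (A ++ B.take j) :=
      le_avgWeight_append hA hT hBA (locallyHeavy_iff_avgWeight_le_take.1 hBh j hj₀ hj.le)

theorem LocallyHeavy.append (hA : A ≠ []) (hB : B ≠ []) (hAh : LocallyHeavy A)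
    (hBh : LocallyHeavy B) (hBA : avgWeight B ≤ avgWeight A) : LocallyHeavy (A ++ B) := by
  rw [locallyHeavy_iff_avgWeight_le_take]
  intro i hi₀ hi
  rcases le_or_gt i A.length with hiA | hAi
  · rw [List.take_append_of_le_length hiA]
    calc avgWeight (A ++ B) ≤ avgWeight A := (avgWeight_append_le_left_iff hA hB).2 hBA
      _ ≤ avgWeight (A.take i) := locallyHeavy_iff_avgWeight_le_take.1 hAh i hi₀ hiA
  · obtain ⟨j, rfl⟩ : ∃ j, i = A.length + j := ⟨i - A.length, by omega⟩
    rw [List.take_length_add_append]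
    exact avgWeight_append_le_append_take hA hBh hBA (by omega) (by simp at hi; omega)

end LocallyHeavy

/-- For nonempty locally heavy words `A` and `B`, the concatenation `A ++ B`
is locally heavy iff the average weight of `A` is at least that of `B`. -/
theorem concat_locallyHeavy_iff (A B : List ℝ) (hA : A ≠ []) (hB : B ≠ [])
    (hAh : LocallyHeavy A) (hBh : LocallyHeavy B) :
    LocallyHeavy (A ++ B) ↔ B.sum / B.length ≤ A.sum / A.length := by
  change LocallyHeavy (A ++ B) ↔ avgWeight B ≤ avgWeight A
  refine ⟨fun h => ?_, hAh.append hA hB hBh⟩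
  rw [← avgWeight_append_le_left_iff hA hB]
  simpa using locallyHeavy_iff_avgWeight_le_take.1 h A.length
    (List.length_pos_iff.2 hA) (by simp)
end

section
/- Let M : ℕ → ℕ be the Morse sequence, M(n) = (sum of the binary digits of n) mod 2. Then for every j ∈ ℕ, every k ∈ ℕ, and every n with 2k < n ≤ 2k+2, the factor of M of length n starting at position j satisfies k ≤ ∑_{i=0}^{n-1} M(j+i) ≤ k+2. -/
/-! Appending a binary digit `0` or `1` to `m` gives `2m` and `2m + 1`, so `M(2m) + M(2m + 1) = 1`.
Hence the prefix sums `P(m) = ∑_{i < m} M(i)` satisfy `|2 P(m) - m| ≤ 1`, and a factor of length `n`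
starting at `j` has weight `P(j + n) - P(j)`, which is within `1` of `n / 2`. -/

open Finset

theorem Nat.digits_two_sum_two_mul (m : ℕ) :
    (Nat.digits 2 (2 * m)).sum = (Nat.digits 2 m).sum := by
  rcases Nat.eq_zero_or_pos m with rfl | hm
  · simp
  · simpa using congrArg List.sum (Nat.digits_add 2 one_lt_two 0 m two_pos (Or.inr hm.ne'))

theorem Nat.digits_two_sum_two_mul_add_one (m : ℕ) :
    (Nat.digits 2 (2 * m + 1)).sum = (Nat.digits 2 m).sum + 1 := by
  have h := congrArg List.sum (Nat.digits_add 2 one_lt_two 1 m one_lt_two (Or.inl one_ne_zero))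
  rw [add_comm 1] at h
  simpa [add_comm] using h

section PairSums

variable {f : ℕ → ℕ}

theorem sum_range_two_mul_of_pair_sum (hf : ∀ m, f (2 * m) + f (2 * m + 1) = 1) (a : ℕ) :
    ∑ i ∈ range (2 * a), f i = a := by
  induction a with
  | zero => simp
  | succ a ih =>
    rw [mul_add_one, sum_range_succ, sum_range_succ, ih, add_assoc, hf]

theorem sum_range_bounds_of_pair_sum (hf : ∀ m, f (2 * m) + f (2 * m + 1) = 1) (m : ℕ) :
    m ≤ 2 * ∑ i ∈ range m, f i + 1 ∧ 2 * ∑ i ∈ range m, f i ≤ m + 1 := by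
  obtain ⟨a, rfl | rfl⟩ := Nat.even_or_odd' m
  · rw [sum_range_two_mul_of_pair_sum hf]
    omega
  · have := hf a
    rw [sum_range_succ, sum_range_two_mul_of_pair_sum hf]
    omega

theorem window_sum_bounds_of_pair_sum (hf : ∀ m, f (2 * m) + f (2 * m + 1) = 1) (j n : ℕ) :
    n ≤ 2 * ∑ i ∈ range n, f (j + i) + 2 ∧ 2 * ∑ i ∈ range n, f (j + i) ≤ n + 2 := by
  have hsplit := sum_range_add f j n
  have hj := sum_range_bounds_of_pair_sum hf j
  have hjn := sum_range_bounds_of_pair_sum hf (j + n)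
  omega

end PairSums

theorem morse_pair_sum (M : ℕ → ℕ) (hM : ∀ n, M n = (Nat.digits 2 n).sum % 2) (m : ℕ) :
    M (2 * m) + M (2 * m + 1) = 1 := by
  rw [hM, hM, Nat.digits_two_sum_two_mul, Nat.digits_two_sum_two_mul_add_one]
  omega

/-- Any factor of the Morse sequence `M(n) = s₂(n) mod 2` of length `n`
with `2k < n ≤ 2k + 2` has weight between `k` and `k + 2`. -/
theorem morse_factor_weight_bounds (M : ℕ → ℕ) (hM : ∀ n, M n = (Nat.digits 2 n).sum % 2)
    (j k n : ℕ) (h1 : 2 * k < n) (h2 : n ≤ 2 * k + 2) :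
    k ≤ ∑ i ∈ Finset.range n, M (j + i) ∧ ∑ i ∈ Finset.range n, M (j + i) ≤ k + 2 := by
  have := window_sum_bounds_of_pair_sum (morse_pair_sum M hM) j n
  omega
end

section
/- Let M : ℕ → ℕ be the Morse sequence, M(n) = (sum of the binary digits of n) mod 2. Let X : ℕ → ℕ be a sequence such that every finite initial word X(0) … X(n-1) is a factor of M, and suppose X(0) = X(1) = 1. Then X is (1/2)-heavy: for every n ≥ 1, ∑_{i=0}^{n-1} X(i) ≥ n/2. -/
/-!
The Morse sequence is a concatenation of the blocks `01` and `10`, i.e. `M (2k) + M (2k + 1) = 1`.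
A factor beginning with `11` cannot start at an even position, so it starts at an odd one; after
its first letter it then splits into aligned blocks each contributing exactly one `1`, and the
leading `1` compensates for a possibly incomplete last block.
-/

open Finset

def morse (n : ℕ) : ℕ := (Nat.digits 2 n).sum % 2

lemma digits_sum_two_mul_add_one (k : ℕ) :
    (Nat.digits 2 (2 * k + 1)).sum = (Nat.digits 2 (2 * k)).sum + 1 := by
  rw [add_comm _ 1, Nat.digits_add 2 one_lt_two 1 k one_lt_two (Or.inl one_ne_zero)]
  rcases Nat.eq_zero_or_pos k with rfl | hk
  · simp
  · rw [← zero_add (2 * k), Nat.digits_add 2 one_lt_two 0 k two_pos (Or.inr hk.ne')]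
    simp [add_comm]

lemma morse_two_mul_add_morse_two_mul_add_one (k : ℕ) :
    morse (2 * k) + morse (2 * k + 1) = 1 := by
  unfold morse
  rw [digits_sum_two_mul_add_one]
  omega

lemma odd_of_morse_eq_one_of_morse_succ_eq_one {j : ℕ} (h0 : morse j = 1)
    (h1 : morse (j + 1) = 1) : Odd j := by
  rcases Nat.even_or_odd' j with ⟨k, rfl | rfl⟩
  · have := morse_two_mul_add_morse_two_mul_add_one k
    omega
  · exact odd_two_mul_add_one k

lemma morse_add_pair_of_odd {j : ℕ} (hj : Odd j) (p : ℕ) :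
    morse (j + (2 * p + 1)) + morse (j + (2 * p + 2)) = 1 := by
  obtain ⟨t, rfl⟩ := hj
  convert morse_two_mul_add_morse_two_mul_add_one (t + p + 1) using 3 <;> ring

section PairedSequences

variable {f : ℕ → ℕ} (hf : ∀ p, f (2 * p + 1) + f (2 * p + 2) = 1)
include hf

lemma sum_range_two_mul_add_one_of_pairs (q : ℕ) :
    ∑ i ∈ range (2 * q + 1), f i = f 0 + q := by
  induction q with
  | zero => simp
  | succ q ih =>
    rw [show 2 * (q + 1) + 1 = 2 * q + 1 + 1 + 1 by ring, sum_range_succ, sum_range_succ, ih,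
      add_assoc, hf q]
    ring

lemma le_two_mul_sum_range_of_pairs (hf0 : f 0 = 1) (n : ℕ) :
    n ≤ 2 * ∑ i ∈ range n, f i := by
  rcases Nat.even_or_odd' n with ⟨q, rfl | rfl⟩
  · rcases q with _ | q
    · simp
    · have hsub : ∑ i ∈ range (2 * q + 1), f i ≤ ∑ i ∈ range (2 * (q + 1)), f i :=
        sum_le_sum_of_subset (range_subset_range.mpr (by omega))
      rw [sum_range_two_mul_add_one_of_pairs hf, hf0] at hsub
      omega
  · rw [sum_range_two_mul_add_one_of_pairs hf, hf0]
    omega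

end PairedSequences

/-- Any sequence all of whose initial words are factors of the Morse
sequence `M(n) = s₂(n) mod 2` and which begins with `11` is `1/2`-heavy. -/
theorem morse_begins_one_one_is_half_heavy
    (M : ℕ → ℕ) (hM : ∀ n, M n = (Nat.digits 2 n).sum % 2)
    (X : ℕ → ℕ) (hfac : ∀ n : ℕ, ∃ j : ℕ, ∀ i < n, X i = M (j + i))
    (h0 : X 0 = 1) (h1 : X 1 = 1) :
    ∀ n : ℕ, 1 ≤ n → (n : ℝ) / 2 ≤ ∑ i ∈ Finset.range n, (X i : ℝ) := by
  obtain rfl : M = morse := funext hM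
  intro n _
  obtain ⟨j, hj⟩ := hfac (n + 2)
  have hj0 : morse j = 1 := by simpa [h0] using (hj 0 (by omega)).symm
  have hj1 : morse (j + 1) = 1 := by simpa [h1] using (hj 1 (by omega)).symm
  have hsum : ∑ i ∈ range n, X i = ∑ i ∈ range n, morse (j + i) :=
    sum_congr rfl fun i hi => hj i (by have := mem_range.mp hi; omega)
  have hle : n ≤ 2 * ∑ i ∈ range n, X i := hsum ▸ le_two_mul_sum_range_of_pairs
    (morse_add_pair_of_odd (odd_of_morse_eq_one_of_morse_succ_eq_one hj0 hj1)) hj0 n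
  rw [← Nat.cast_sum]
  have : (n : ℝ) ≤ 2 * ((∑ i ∈ range n, X i : ℕ) : ℝ) := by exact_mod_cast hle
  linarith
end

section
/- Let X : ℕ → {0,1} be a Sturmian sequence whose density α = lim_{n→∞} (1/n)∑_{i=0}^{n-1} X(i) is irrational. Then, with σ the shift map (σ(Y)(n) = Y(n+1)) and the product topology on {0,1}^ℕ, the closure of the forward orbit {σ^n X : n ∈ ℕ} contains exactly one sequence Y which is α-heavy, i.e. exactly one Y with ∑_{i=0}^{n-1} Y(i) ≥ nα for all n ≥ 1. -/
/-!
Balancedness and density force every window sum of length `n` to be an integer within `1` of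
`n α`, hence (as `n α` is irrational) equal to `⌊n α⌋` or `⌈n α⌉`; this persists in the orbit
closure. An `α`-heavy sequence there has all prefix sums `⌈n α⌉`, so it is the upper mechanical
word `k ↦ ⌈(k+1) α⌉ - ⌈k α⌉`. That word does lie in the orbit closure: if for some `N` every
position started a light window of length at most `N`, then, since light windows of bounded length
fall short of `n α` by a uniform amount, chaining them would give prefixes whose sums fall
arbitrarily far below `n α`, against balancedness. So some shift of `X` has all its windows of
length at most `N` heavy, hence agrees with the mechanical word on `[0, N)`.
-/

open Filter Finset Topology

lemma Finset.exists_pos_forall_le {ι : Type*} (s : Finset ι) {f : ι → ℝ}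
    (hf : ∀ i ∈ s, 0 < f i) : ∃ δ > 0, ∀ i ∈ s, δ ≤ f i := by
  rcases s.eq_empty_or_nonempty with rfl | hs
  · exact ⟨1, one_pos, by simp⟩
  · obtain ⟨i₀, hi₀, hmin⟩ := s.exists_min_image f hs
    exact ⟨f i₀, hf i₀ hi₀, hmin⟩

lemma Irrational.eq_ceil_of_le_of_abs_sub_le_one {x : ℝ} (hx : Irrational x) {z : ℤ}
    (hle : x ≤ z) (hz : |(z : ℝ) - x| ≤ 1) : z = ⌈x⌉ := by
  have hlt : ((z - 1 : ℤ) : ℝ) < x := by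
    push_cast
    exact lt_of_le_of_ne (by linarith [(abs_sub_le_iff.1 hz).1])
      (by exact_mod_cast (hx.ne_int (z - 1)).symm)
  have := Int.lt_ceil.2 hlt
  have := Int.ceil_le.2 hle
  omega

lemma mem_closure_of_forall_exists_eqOn_Iio {β : Type*} [TopologicalSpace β]
    {s : Set (ℕ → β)} {Y : ℕ → β} (h : ∀ N, ∃ W ∈ s, Set.EqOn W Y (Set.Iio N)) :
    Y ∈ closure s := by
  choose W hWs hWY using h
  have hWY : Tendsto W atTop (𝓝 Y) := tendsto_pi_nhds.2 fun k => tendsto_const_nhds.congr' <| by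
    filter_upwards [eventually_gt_atTop k] with N hN using (hWY N hN).symm
  exact mem_closure_of_tendsto hWY (Eventually.of_forall hWs)

noncomputable def upperMechanical (α : ℝ) (k : ℕ) : ℝ := ⌈((k + 1 : ℕ) : ℝ) * α⌉ - ⌈(k : ℝ) * α⌉

lemma sum_range_upperMechanical (α : ℝ) (n : ℕ) :
    ∑ i ∈ range n, upperMechanical α i = ⌈(n : ℝ) * α⌉ :=
  (sum_range_sub (fun t : ℕ => ((⌈(t : ℝ) * α⌉ : ℤ) : ℝ)) n).trans (by simp)

lemma eqOn_upperMechanical_of_sum_range {α : ℝ} {W : ℕ → ℝ} {N : ℕ}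
    (h : ∀ n ≤ N, ∑ i ∈ range n, W i = ⌈(n : ℝ) * α⌉) :
    Set.EqOn W (upperMechanical α) (Set.Iio N) := by
  intro k hk
  rw [← sum_range_succ_sub_sum W, h (k + 1) hk, h k (Nat.le_of_lt hk), upperMechanical]

lemma sum_range_eq_ceil {α : ℝ} (hα : Irrational α) {W : ℕ → ℝ} {n : ℕ}
    (hint : ∑ i ∈ range n, W i ∈ Set.range ((↑) : ℤ → ℝ))
    (hbal : |∑ i ∈ range n, W i - n * α| ≤ 1)
    (hheavy : 1 ≤ n → n * α ≤ ∑ i ∈ range n, W i) :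
    ∑ i ∈ range n, W i = ⌈(n : ℝ) * α⌉ := by
  rcases Nat.eq_zero_or_pos n with rfl | hn
  · simp
  obtain ⟨z, hz⟩ := hint
  rw [← hz] at hbal hheavy ⊢
  exact_mod_cast (hα.natCast_mul hn.ne').eq_ceil_of_le_of_abs_sub_le_one (hheavy hn) hbal

def windowSum (X : ℕ → ℝ) (j n : ℕ) : ℝ := ∑ k ∈ range n, X (j + k)

section windowSum

variable {X : ℕ → ℝ} {α : ℝ}

lemma windowSum_zero_left (X : ℕ → ℝ) (n : ℕ) : windowSum X 0 n = ∑ i ∈ range n, X i := by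
  simp [windowSum]

lemma windowSum_add (X : ℕ → ℝ) (j a b : ℕ) :
    windowSum X j (a + b) = windowSum X j a + windowSum X (j + a) b := by
  simp [windowSum, sum_range_add, add_assoc]

lemma windowSum_mul (X : ℕ → ℝ) (T n : ℕ) :
    windowSum X 0 (T * n) = ∑ t ∈ range T, windowSum X (t * n) n := by
  induction T with
  | zero => simp [windowSum]
  | succ T ih => rw [Nat.succ_mul, windowSum_add, ih, sum_range_succ, zero_add]

lemma windowSum_mem_range_intCast (hX : ∀ i, X i ∈ Set.range ((↑) : ℤ → ℝ)) (j n : ℕ) :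
    windowSum X j n ∈ Set.range ((↑) : ℤ → ℝ) := by
  choose z hz using hX
  exact ⟨∑ k ∈ range n, z (j + k), by simp [windowSum, hz]⟩

lemma abs_windowSum_mul_sub_le
    (hSturm : ∀ j₁ j₂ n : ℕ, |windowSum X j₁ n - windowSum X j₂ n| ≤ 1) (j T n : ℕ) :
    |windowSum X 0 (T * n) - T * windowSum X j n| ≤ T := by
  have hconst : (T : ℝ) * windowSum X j n = ∑ _t ∈ range T, windowSum X j n := by simp
  rw [windowSum_mul, hconst, ← sum_sub_distrib]
  calc |∑ t ∈ range T, (windowSum X (t * n) n - windowSum X j n)|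
      ≤ ∑ t ∈ range T, |windowSum X (t * n) n - windowSum X j n| := abs_sum_le_sum_abs _ _
    _ ≤ ∑ t ∈ range T, (1 : ℝ) := sum_le_sum fun t _ => hSturm _ _ _
    _ = T := by simp

lemma abs_windowSum_sub_mul_le
    (hSturm : ∀ j₁ j₂ n : ℕ, |windowSum X j₁ n - windowSum X j₂ n| ≤ 1)
    (hdens : Tendsto (fun n : ℕ => (∑ i ∈ range n, X i) / n) atTop (𝓝 α)) (j n : ℕ) :
    |windowSum X j n - n * α| ≤ 1 := by
  rcases Nat.eq_zero_or_pos n with rfl | hn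
  · simp [windowSum]
  have hlim : Tendsto (fun T : ℕ => windowSum X 0 (T * n) / T) atTop (𝓝 (n * α)) := by
    have hTn : Tendsto (fun T : ℕ => T * n) atTop atTop :=
      tendsto_atTop_mono (fun T => Nat.le_mul_of_pos_right T hn) tendsto_id
    refine ((hdens.comp hTn).const_mul (n : ℝ)).congr' ?_
    filter_upwards [eventually_ge_atTop 1] with T hT
    have : (T : ℝ) ≠ 0 := by positivity
    simp only [Function.comp_apply, windowSum_zero_left]
    push_cast
    field_simp
  have hblock : ∀ T : ℕ, 1 ≤ T → |windowSum X 0 (T * n) / T - windowSum X j n| ≤ 1 := by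
    intro T hT
    have hT0 : (0 : ℝ) < T := by exact_mod_cast hT
    rw [← mul_div_cancel_left₀ (windowSum X j n) hT0.ne', ← sub_div, abs_div, abs_of_pos hT0,
      div_le_one hT0]
    exact abs_windowSum_mul_sub_le hSturm j T n
  rw [abs_sub_comm]
  exact le_of_tendsto ((hlim.sub_const _).abs) (eventually_atTop.2 ⟨1, hblock⟩)

lemma exists_windowSum_le_sub_mul {δ : ℝ} (h : ∀ m, ∃ n, windowSum X m n ≤ n * α - δ) (i : ℕ) :
    ∃ p, windowSum X 0 p ≤ p * α - i * δ := by
  induction i with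
  | zero => exact ⟨0, by simp [windowSum]⟩
  | succ i ih =>
    obtain ⟨p, hp⟩ := ih
    obtain ⟨n, hn⟩ := h p
    refine ⟨p + n, ?_⟩
    rw [windowSum_add, zero_add]
    push_cast
    linarith

lemma exists_forall_le_windowSum (hα : Irrational α)
    (hint : ∀ j n, windowSum X j n ∈ Set.range ((↑) : ℤ → ℝ)) (C : ℝ)
    (hC : ∀ n, n * α - C ≤ windowSum X 0 n) (N : ℕ) :
    ∃ m, ∀ n, 1 ≤ n → n ≤ N → n * α ≤ windowSum X m n := by
  by_contra! hlight
  obtain ⟨δ, hδ, hδle⟩ := (Finset.Icc 1 N).exists_pos_forall_le (f := fun n => Int.fract (n * α))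
    fun n hn => Int.fract_pos.2 ((hα.natCast_mul (by grind)).ne_int _)
  -- an integer below `n α` is at most `⌊n α⌋ = n α - fract (n α)`
  have hdeficit : ∀ m, ∃ n, windowSum X m n ≤ n * α - δ := fun m => by
    obtain ⟨n, h1, hN, hlt⟩ := hlight m
    obtain ⟨z, hz⟩ := hint m n
    have hfloor : z ≤ ⌊(n : ℝ) * α⌋ := Int.le_floor.2 (hz ▸ hlt.le)
    have hfract := hδle n (Finset.mem_Icc.2 ⟨h1, hN⟩)
    refine ⟨n, ?_⟩
    rw [← hz, Int.fract] at *
    have : (z : ℝ) ≤ ⌊(n : ℝ) * α⌋ := by exact_mod_cast hfloor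
    linarith
  obtain ⟨i, hi⟩ := exists_nat_gt (C / δ)
  obtain ⟨p, hp⟩ := exists_windowSum_le_sub_mul hdeficit i
  rw [div_lt_iff₀ hδ] at hi
  linarith [hC p]

end windowSum

/-- For a Sturmian binary sequence `X` of irrational density `α`, the closure
of the forward shift-orbit of `X` (product topology) contains exactly one `α`-heavy sequence. -/
theorem sturmian_orbit_closure_unique_alpha_heavy
    (X : ℕ → ℝ) (hX : ∀ i, X i = 0 ∨ X i = 1)
    (hSturm : ∀ j₁ j₂ n : ℕ,
      |(∑ k ∈ Finset.range n, X (j₁ + k)) - ∑ k ∈ Finset.range n, X (j₂ + k)| ≤ 1)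
    (α : ℝ) (hα : Irrational α)
    (hdens : Filter.Tendsto (fun n : ℕ => (∑ i ∈ Finset.range n, X i) / n)
      Filter.atTop (nhds α)) :
    ∃! Y : ℕ → ℝ, Y ∈ closure (Set.range fun m : ℕ => fun k : ℕ => X (m + k)) ∧
      ∀ n : ℕ, 1 ≤ n → (n : ℝ) * α ≤ ∑ i ∈ Finset.range n, Y i := by
  have hint := windowSum_mem_range_intCast (X := X) fun i => (hX i).elim
    (fun h => ⟨0, by simp [h]⟩) (fun h => ⟨1, by simp [h]⟩)
  have hbal := abs_windowSum_sub_mul_le hSturm hdens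
  refine ⟨upperMechanical α, ⟨?_, fun n _ => ?_⟩, ?_⟩
  · refine mem_closure_of_forall_exists_eqOn_Iio fun N => ?_
    obtain ⟨m, hm⟩ := exists_forall_le_windowSum hα hint 1
      (fun n => by linarith [(abs_sub_le_iff.1 (hbal 0 n)).2]) N
    exact ⟨_, ⟨m, rfl⟩, eqOn_upperMechanical_of_sum_range fun n hn =>
      sum_range_eq_ceil hα (hint m n) (hbal m n) fun h1 => hm n h1 hn⟩
  · rw [sum_range_upperMechanical]
    exact Int.le_ceil _
  · rintro W ⟨hWc, hWh⟩
    have hpin : ∀ n : ℕ,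
        ∑ i ∈ range n, W i ∈ Set.range ((↑) : ℤ → ℝ) ∩ Metric.closedBall (n * α) 1 :=
      fun n => (Real.isClosed_range_intCast.inter Metric.isClosed_closedBall).closure_subset
        (map_mem_closure (by fun_prop) hWc (by
          rintro _ ⟨m, rfl⟩
          exact ⟨hint m n, by rw [Metric.mem_closedBall, Real.dist_eq]; exact hbal m n⟩))
    funext k
    refine eqOn_upperMechanical_of_sum_range (N := k + 1) (fun n _ => ?_) (lt_add_one k)
    exact sum_range_eq_ceil hα (hpin n).1 (by simpa [Real.dist_eq] using (hpin n).2) (hWh n)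
end

section
/- For every n ≥ 1 and every m with 0 ≤ m ≤ n, there is exactly one binary word A of length n and weight m which is both Sturmian (any two factors of A of equal length have weights differing by at most 1) and locally heavy (every nonempty prefix of A has average weight ≥ m/n). -/
/-- `B` is a factor of the finite word `A`. -/
def ListFactor (B A : List ℕ) : Prop :=
  ∃ j : ℕ, B = (A.drop j).take B.length

/-- A finite binary word is Sturmian if any two of its factors of equal length have weights
differing by at most 1. -/
def SturmianWord (A : List ℕ) : Prop :=
  ∀ B C : List ℕ, ListFactor B A → ListFactor C A → B.length = C.length →
    |(B.sum : ℤ) - (C.sum : ℤ)| ≤ 1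

/-- A word is locally heavy if every nonempty prefix has average weight at least the
average weight of the whole word. -/
def LocallyHeavyWord (A : List ℕ) : Prop :=
  ∀ i : ℕ, 1 ≤ i → i ≤ A.length → (A.sum : ℝ) / A.length ≤ ((A.take i).sum : ℝ) / i

/-!
The witness is the upper mechanical word of slope `m / n`, whose prefix of length `i` has weight
`⌈i m / n⌉`; its factors of length `L` weigh `⌈L m / n⌉` or `⌈L m / n⌉ - 1`, by sub- and
superadditivity of the ceiling.

Conversely, let `s i` be the weight of the prefix of length `i` of a Sturmian, locally heavy word.
Local heaviness gives `⌈i m / n⌉ ≤ s i`, and balancing the prefix and the suffix of length `i`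
gives `s i + s (n - i) ≤ m + 1`. Since `⌈i m / n⌉ + ⌈(n - i) m / n⌉ ≥ m`, strictly unless `n ∣ i m`,
the excess `s i - ⌈i m / n⌉` is `0` or `1`, and `1` only at multiples of `d = n / gcd n m`. Over a
block of length `d` the ceiling grows by exactly `d m / n`, and the excess vanishes at `0` and `n`;
so an excess somewhere forces a block where it appears and a block where it disappears: two
factors of length `d` whose weights differ by `2`.
-/

namespace Nat

theorem mul_ceilDiv_lt {a : ℕ} (ha : 0 < a) (b : ℕ) : a * (b ⌈/⌉ a) < b + a := by
  rw [ceilDiv_eq_add_pred_div]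
  have := Nat.mul_div_le (b + a - 1) a
  omega

theorem lt_mul_ceilDiv {a b : ℕ} (ha : 0 < a) (h : ¬ a ∣ b) : b < a * (b ⌈/⌉ a) :=
  (le_smul_ceilDiv ha).lt_of_ne fun heq => h ⟨_, heq⟩

theorem ceilDiv_mono (a : ℕ) : Monotone fun b : ℕ => b ⌈/⌉ a := by
  rcases a.eq_zero_or_pos with rfl | ha
  · simp [Monotone]
  · exact (gc_mul_ceilDiv ha).monotone_l

theorem add_ceilDiv_le (a b c : ℕ) : (b + c) ⌈/⌉ a ≤ b ⌈/⌉ a + c ⌈/⌉ a := by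
  rcases a.eq_zero_or_pos with rfl | ha
  · simp
  rw [ceilDiv_le_iff_le_mul ha, mul_add]
  exact add_le_add (le_smul_ceilDiv ha) (le_smul_ceilDiv ha)

theorem ceilDiv_add_ceilDiv_le (a b c : ℕ) : b ⌈/⌉ a + c ⌈/⌉ a ≤ (b + c) ⌈/⌉ a + 1 := by
  rcases a.eq_zero_or_pos with rfl | ha
  · simp
  have hb := mul_ceilDiv_lt ha b
  have hc := mul_ceilDiv_lt ha c
  have hbc : b + c ≤ a * ((b + c) ⌈/⌉ a) := le_smul_ceilDiv ha
  have : a * (b ⌈/⌉ a + c ⌈/⌉ a) < a * ((b + c) ⌈/⌉ a + 2) := by linarith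
  have := Nat.lt_of_mul_lt_mul_left this
  omega

theorem add_ceilDiv_le_of_le {a c : ℕ} (hc : c ≤ a) (b : ℕ) : (b + c) ⌈/⌉ a ≤ b ⌈/⌉ a + 1 := by
  refine (add_ceilDiv_le a b c).trans (Nat.add_le_add_left ?_ _)
  rcases a.eq_zero_or_pos with rfl | ha
  · simp
  · rwa [ceilDiv_le_iff_le_mul ha, mul_one]

theorem add_ceilDiv_of_dvd {a c : ℕ} (h : a ∣ c) (b : ℕ) : (b + c) ⌈/⌉ a = b ⌈/⌉ a + c / a := by
  rcases a.eq_zero_or_pos with rfl | ha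
  · simp [zero_dvd_iff.1 h]
  obtain ⟨k, rfl⟩ := h
  rw [Nat.mul_div_cancel_left k ha]
  refine le_antisymm ?_ ?_
  · have h := add_ceilDiv_le a b (a * k)
    rwa [show a * k ⌈/⌉ a = k from smul_ceilDiv ha k] at h
  · have hle : b + a * k ≤ a * ((b + a * k) ⌈/⌉ a) := le_smul_ceilDiv ha
    have hk : k ≤ (b + a * k) ⌈/⌉ a := Nat.le_of_mul_le_mul_left (by omega) ha
    suffices b ⌈/⌉ a ≤ (b + a * k) ⌈/⌉ a - k by omega
    rw [ceilDiv_le_iff_le_mul ha, Nat.mul_sub]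
    omega

theorem div_gcd_dvd_of_dvd_mul {n m j : ℕ} (hn : 0 < n) (h : n ∣ j * m) : n / n.gcd m ∣ j :=
  modEq_zero_iff_dvd.1 <| ModEq.cancel_right_div_gcd hn <| by
    rw [zero_mul]
    exact modEq_zero_iff_dvd.2 h

theorem dvd_div_gcd_mul (n m : ℕ) : n ∣ n / n.gcd m * m := by
  rw [Nat.div_mul_right_comm (gcd_dvd_left n m)]
  exact dvd_lcm_left n m

theorem exists_lt_not_and_succ {P : ℕ → Prop} (h0 : ¬ P 0) {k : ℕ} (hk : P k) :
    ∃ i < k, ¬ P i ∧ P (i + 1) := by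
  induction k with
  | zero => exact absurd hk h0
  | succ k ih =>
    by_cases h : P k
    · obtain ⟨i, hi, hPi⟩ := ih h
      exact ⟨i, by omega, hPi⟩
    · exact ⟨k, by omega, h, hk⟩

theorem exists_lt_and_not_succ {P : ℕ → Prop} {N : ℕ} (hN : ¬ P N) {k : ℕ} (hk : P k)
    (hkN : k ≤ N) : ∃ i < N, P i ∧ ¬ P (i + 1) := by
  obtain ⟨i, hi, hPi, hPi'⟩ := exists_lt_not_and_succ (P := fun i => P (N - i))
    (by simpa using hN) (k := N - k) (by rwa [Nat.sub_sub_self hkN])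
  refine ⟨N - (i + 1), by omega, hPi', ?_⟩
  rwa [show N - (i + 1) + 1 = N - i by omega]

end Nat

namespace List

theorem sum_take_ofFn_sub {f : ℕ → ℕ} (hf : Monotone f) {n i : ℕ} (hi : i ≤ n) :
    ((ofFn fun k : Fin n => f (k + 1) - f k).take i).sum = f i - f 0 := by
  induction i with
  | zero => simp
  | succ i ih =>
    rw [sum_take_succ _ _ (by simpa using hi), ih (by omega), List.getElem_ofFn]
    have := hf (Nat.zero_le i)
    have := hf (Nat.le_add_right i 1)
    dsimp only
    omega

theorem ext_sum_take {A B : List ℕ} (hlen : A.length = B.length)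
    (h : ∀ i ≤ A.length, (A.take i).sum = (B.take i).sum) : A = B := by
  refine ext_getElem hlen fun i hiA hiB => ?_
  have := sum_take_succ A i hiA
  have := sum_take_succ B i hiB
  have := h (i + 1) hiA
  have := h i hiA.le
  omega

end List

theorem sturmianWord_iff_sum_take {A : List ℕ} :
    SturmianWord A ↔ ∀ i j L, i + L ≤ A.length → j + L ≤ A.length →
      (A.take (i + L)).sum + (A.take j).sum ≤ (A.take (j + L)).sum + (A.take i).sum + 1 := by
  have window (i L : ℕ) : (A.take i).sum + ((A.drop i).take L).sum = (A.take (i + L)).sum := by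
    rw [List.take_add, List.sum_append]
  constructor
  · intro hS i j L hi hj
    have h := hS ((A.drop i).take L) ((A.drop j).take L) ⟨i, by simp⟩ ⟨j, by simp⟩
      (by simp; omega)
    have := window i L
    have := window j L
    rw [abs_le] at h
    omega
  · rintro h B C ⟨i, hB⟩ ⟨j, hC⟩ hBC
    obtain ⟨L, hL⟩ : ∃ L, B.length = L := ⟨_, rfl⟩
    rw [hL] at hB
    rw [← hBC, hL] at hC
    subst hB hC
    rcases L.eq_zero_or_pos with rfl | hL0
    · simp
    have fits (k : ℕ) (hk : ((A.drop k).take L).length = L) : k + L ≤ A.length := by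
      simp only [List.length_take, List.length_drop] at hk
      omega
    have hi := fits i hL
    have hj := fits j (hBC ▸ hL)
    have := window i L
    have := window j L
    have := h i j L hi hj
    have := h j i L hj hi
    rw [abs_le]
    omega

def upperMechanicalWord (n m : ℕ) : List ℕ :=
  List.ofFn fun i : Fin n => (i + 1) * m ⌈/⌉ n - i * m ⌈/⌉ n

section upperMechanicalWord

variable {n m : ℕ}

@[simp]
theorem length_upperMechanicalWord : (upperMechanicalWord n m).length = n := by
  simp [upperMechanicalWord]

theorem sum_take_upperMechanicalWord {i : ℕ} (hi : i ≤ n) :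
    ((upperMechanicalWord n m).take i).sum = i * m ⌈/⌉ n := by
  have hmono : Monotone fun i : ℕ => i * m ⌈/⌉ n :=
    (Nat.ceilDiv_mono n).comp fun _ _ h => Nat.mul_le_mul_right m h
  simpa [upperMechanicalWord] using List.sum_take_ofFn_sub hmono hi

theorem sum_upperMechanicalWord (hm : m ≤ n) : (upperMechanicalWord n m).sum = m := by
  rcases n.eq_zero_or_pos with rfl | hn
  · simp [upperMechanicalWord, Nat.le_zero.1 hm]
  have h := sum_take_upperMechanicalWord (m := m) (le_refl n)
  rwa [List.take_of_length_le (by simp), ← smul_eq_mul, smul_ceilDiv hn] at h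

theorem le_one_of_mem_upperMechanicalWord (hm : m ≤ n) :
    ∀ a ∈ upperMechanicalWord n m, a ≤ 1 := by
  simp only [upperMechanicalWord, List.mem_ofFn, forall_exists_index]
  rintro _ i rfl
  have := Nat.add_ceilDiv_le_of_le hm (i * m)
  rw [add_one_mul]
  omega

theorem sturmianWord_upperMechanicalWord : SturmianWord (upperMechanicalWord n m) := by
  refine sturmianWord_iff_sum_take.2 fun i j L hi hj => ?_
  simp only [length_upperMechanicalWord] at hi hj
  simp only [sum_take_upperMechanicalWord hi, sum_take_upperMechanicalWord hj,
    sum_take_upperMechanicalWord (le_of_add_le_left hi),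
    sum_take_upperMechanicalWord (le_of_add_le_left hj), add_mul]
  have := Nat.add_ceilDiv_le n (i * m) (L * m)
  have := Nat.ceilDiv_add_ceilDiv_le n (j * m) (L * m)
  omega

theorem locallyHeavyWord_upperMechanicalWord (hm : m ≤ n) :
    LocallyHeavyWord (upperMechanicalWord n m) := by
  intro i hi0 hi
  rw [length_upperMechanicalWord] at hi ⊢
  have hn : 0 < n := by omega
  rw [sum_upperMechanicalWord hm, sum_take_upperMechanicalWord hi,
    div_le_div_iff₀ (by exact_mod_cast hn) (by exact_mod_cast hi0)]
  have : i * m ≤ n * (i * m ⌈/⌉ n) := le_smul_ceilDiv hn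
  exact_mod_cast (by linarith : m * i ≤ (i * m ⌈/⌉ n) * n)

end upperMechanicalWord

theorem LocallyHeavyWord.ceilDiv_le_sum_take {A : List ℕ} (hH : LocallyHeavyWord A) {i : ℕ}
    (hi : i ≤ A.length) : i * A.sum ⌈/⌉ A.length ≤ (A.take i).sum := by
  rcases i.eq_zero_or_pos with rfl | hi0
  · simp
  have hn : 0 < A.length := hi0.trans_le hi
  have h := hH i hi0 hi
  rw [div_le_div_iff₀ (by exact_mod_cast hn) (by exact_mod_cast hi0)] at h
  have : A.sum * i ≤ (A.take i).sum * A.length := by exact_mod_cast h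
  rw [ceilDiv_le_iff_le_mul hn]
  linarith

section uniqueness

variable {A : List ℕ} {n m : ℕ}

theorem SturmianWord.sum_take_eq_ceilDiv_or (hS : SturmianWord A) (hH : LocallyHeavyWord A)
    (hlen : A.length = n) (hsum : A.sum = m) {j : ℕ} (hj : j ≤ n) :
    (A.take j).sum = j * m ⌈/⌉ n ∨ (A.take j).sum = j * m ⌈/⌉ n + 1 ∧ n ∣ j * m := by
  rcases n.eq_zero_or_pos with rfl | hn
  · simp [show j = 0 by omega]
  have hlow := hH.ceilDiv_le_sum_take (hlen ▸ hj)
  have hlow' := hH.ceilDiv_le_sum_take (i := n - j) (by omega)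
  have hbal := sturmianWord_iff_sum_take.1 hS 0 (n - j) j (by omega) (by omega)
  rw [zero_add, Nat.sub_add_cancel hj, List.take_of_length_le hlen.le, hsum, List.take_zero,
    List.sum_nil] at hbal
  rw [hlen, hsum] at hlow hlow'
  have hsplit : j * m + (n - j) * m = n * m := by rw [← add_mul, Nat.add_sub_cancel' hj]
  have hcj : j * m ≤ n * (j * m ⌈/⌉ n) := le_smul_ceilDiv hn
  have hcnj : (n - j) * m ≤ n * ((n - j) * m ⌈/⌉ n) := le_smul_ceilDiv hn
  have hceil : m ≤ j * m ⌈/⌉ n + (n - j) * m ⌈/⌉ n :=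
    Nat.le_of_mul_le_mul_left (by rw [mul_add]; omega) hn
  by_cases hdvd : n ∣ j * m
  · omega
  · have hcj' := Nat.lt_mul_ceilDiv hn hdvd
    have hceil' : m < j * m ⌈/⌉ n + (n - j) * m ⌈/⌉ n :=
      Nat.lt_of_mul_lt_mul_left (a := n) (by rw [mul_add]; omega)
    omega

theorem SturmianWord.sum_take_eq_ceilDiv (hS : SturmianWord A) (hH : LocallyHeavyWord A)
    (hlen : A.length = n) (hsum : A.sum = m) {j : ℕ} (hj : j ≤ n) :
    (A.take j).sum = j * m ⌈/⌉ n := by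
  by_contra hne
  rcases n.eq_zero_or_pos with rfl | hn
  · simp [show j = 0 by omega] at hne
  obtain ⟨-, hdvd⟩ := (hS.sum_take_eq_ceilDiv_or hH hlen hsum hj).resolve_left hne
  set d := n / n.gcd m
  have hper (i : ℕ) : (i + d) * m ⌈/⌉ n = i * m ⌈/⌉ n + d * m / n := by
    rw [add_mul]
    exact Nat.add_ceilDiv_of_dvd (Nat.dvd_div_gcd_mul n m) _
  obtain ⟨k, rfl⟩ : d ∣ j := Nat.div_gcd_dvd_of_dvd_mul hn hdvd
  obtain ⟨N, hN⟩ : d ∣ n := Nat.div_dvd_of_dvd (Nat.gcd_dvd_left n m)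
  have hkN : k ≤ N := Nat.le_of_mul_le_mul_left (hN ▸ hj) (Nat.pos_of_mul_pos_right (hN ▸ hn))
  have hle {l : ℕ} (hl : l ≤ N) : d * l ≤ n := hN ▸ Nat.mul_le_mul_left d hl
  let bad (i : ℕ) := (A.take (d * i)).sum ≠ d * i * m ⌈/⌉ n
  have hbadN : ¬ bad N := by
    rw [not_not, ← hN, List.take_of_length_le hlen.le, hsum, ← smul_eq_mul, smul_ceilDiv hn]
  obtain ⟨i, hik, hgood, hbad⟩ := Nat.exists_lt_not_and_succ (P := bad) (by simp [bad]) hne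
  obtain ⟨i', hi'N, hbad', hgood'⟩ := Nat.exists_lt_and_not_succ hbadN hne hkN
  simp only [bad, not_not, mul_add_one] at hgood hbad hbad' hgood'
  have hup := hS.sum_take_eq_ceilDiv_or hH hlen hsum (hle (show i + 1 ≤ N by omega))
  have hdown := hS.sum_take_eq_ceilDiv_or hH hlen hsum (hle hi'N.le)
  rw [mul_add_one] at hup
  have hbal := sturmianWord_iff_sum_take.1 hS (d * i) (d * i') d
    (by rw [← mul_add_one, hlen]; exact hle (by omega))
    (by rw [← mul_add_one, hlen]; exact hle hi'N)
  have := hper (d * i)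
  have := hper (d * i')
  omega

theorem SturmianWord.eq_upperMechanicalWord (hS : SturmianWord A) (hH : LocallyHeavyWord A)
    (hlen : A.length = n) (hsum : A.sum = m) : A = upperMechanicalWord n m :=
  List.ext_sum_take (by simp [hlen]) fun i hi => by
    rw [hS.sum_take_eq_ceilDiv hH hlen hsum (hlen ▸ hi),
      sum_take_upperMechanicalWord (hlen ▸ hi)]

end uniqueness

theorem unique_heavy_sturmian_word_general (n m : ℕ) (hm : m ≤ n) :
    ∃! A : List ℕ, A.length = n ∧ A.sum = m ∧ (∀ a ∈ A, a ≤ 1) ∧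
      SturmianWord A ∧ LocallyHeavyWord A :=
  ⟨upperMechanicalWord n m,
    ⟨length_upperMechanicalWord, sum_upperMechanicalWord hm, le_one_of_mem_upperMechanicalWord hm,
      sturmianWord_upperMechanicalWord, locallyHeavyWord_upperMechanicalWord hm⟩,
    fun _ ⟨hlen, hsum, _, hS, hH⟩ => hS.eq_upperMechanicalWord hH hlen hsum⟩

/-- For every `n ≥ 1` and `m ≤ n` there is exactly one binary word of
length `n` and weight `m` which is both Sturmian and locally heavy. -/
theorem unique_heavy_sturmian_word (n m : ℕ) (hn : 1 ≤ n) (hm : m ≤ n) :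
    ∃! A : List ℕ, A.length = n ∧ A.sum = m ∧ (∀ a ∈ A, a ≤ 1) ∧
      SturmianWord A ∧ LocallyHeavyWord A :=
  unique_heavy_sturmian_word_general n m hm
end

section
/- Let X : ℕ → {0,1} be a Sturmian sequence which contains at least two indices with value 1 and at least two indices with value 0, and let N = max{n : the constant word 1^n or 0^n is a factor of X} (which is finite under these hypotheses). Then for every n with 1 ≤ n ≤ N, X has exactly two distinct locally heavy factors of length n, and for every n > N, X has at most one locally heavy factor of length n. -/
/-- `A` is a factor of the sequence `X : ℕ → ℕ`. -/
def SeqFactor (A : List ℕ) (X : ℕ → ℕ) : Prop :=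
  ∃ j : ℕ, A = (List.range A.length).map fun i => X (j + i)

/-!
Let `w` be a locally heavy factor of length `n` and weight `T`, let `s m` be the weight of its
prefix of length `m`, and put `d m = n * s m - T * m`. Local heaviness says `d ≥ 0`, balance says
that increments of `d` over intervals of equal length differ by at most `n`, and `d 0 = d n = 0`.
This forces `d < n`: otherwise compare the first and the last point where `d = n`. Hence
`s m = ⌈T m / n⌉`, so a locally heavy factor is determined by its length and weight.

Factors of length `n` have at most two, consecutive, weights. For `n ≤ N` a maximal run yields
locally heavy factors of both weights (`1ⁿ` and `1ⁿ⁻¹0`, or `10ⁿ⁻¹` and `0ⁿ`). For `n > N`, if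
two locally heavy factors had weights `T + 1` and `T ≥ 1`, the lighter one starts with `1`, so by
balance the heavier one has weight at most `T` on its first `n - 1` letters; local heaviness at
`n - 1` then forces `T + 1 ≥ n`, i.e. the heavier factor is `1ⁿ`.
-/

namespace Sturmian

open Finset

theorem lt_of_increment_le_add {n : ℕ} {c : ℤ} (hc : 0 < c) {d : ℕ → ℤ}
    (hnonneg : ∀ m ≤ n, 0 ≤ d m) (h0 : d 0 = 0) (hn : d n = 0)
    (hinc : ∀ a b l, a + l ≤ n → b + l ≤ n → d (a + l) - d a ≤ d (b + l) - d b + c) :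
    ∀ m ≤ n, d m < c := by
  have hle : ∀ m ≤ n, d m ≤ c := fun m hm => by
    have := hinc 0 (n - m) m (by omega) (by omega)
    rw [zero_add, show n - m + m = n by omega] at this
    linarith [hnonneg (n - m) (by omega)]
  by_contra! hex
  have hP : ∃ m, m ≤ n ∧ d m = c := by
    obtain ⟨m, hm, hcm⟩ := hex
    exact ⟨m, hm, le_antisymm (hle m hm) hcm⟩
  classical
  set m₀ := Nat.find hP
  obtain ⟨hm₀n, hm₀⟩ : m₀ ≤ n ∧ d m₀ = c := Nat.find_spec hP
  set m₂ := Nat.findGreatest (fun m => m ≤ n ∧ d m = c) n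
  obtain ⟨hm₂n, hm₂⟩ : m₂ ≤ n ∧ d m₂ = c :=
    Nat.findGreatest_spec (P := fun m => m ≤ n ∧ d m = c) hm₀n ⟨hm₀n, hm₀⟩
  have hm₀pos : 0 < m₀ := Nat.pos_of_ne_zero fun h => by rw [← h] at h0; omega
  have hm₂lt : m₂ < n := lt_of_le_of_ne hm₂n fun h => by rw [h] at hm₂; omega
  -- On intervals of length `min m₀ (n - m₂)` ending at `m₀` and starting at `m₂`, the
  -- increments of `d` differ by `2c` unless `d = c` somewhere outside `[m₀, m₂]`.
  rcases le_or_gt (m₀ + m₂) n with hsum | hsum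
  · have := hinc 0 m₂ m₀ (by omega) (by omega)
    rw [zero_add, h0, hm₀, hm₂] at this
    exact Nat.findGreatest_is_greatest (show m₂ < m₂ + m₀ by omega) (by omega)
      ⟨by omega, le_antisymm (hle _ (by omega)) (by linarith)⟩
  · have := hinc (m₀ + m₂ - n) m₂ (n - m₂) (by omega) (by omega)
    rw [show m₀ + m₂ - n + (n - m₂) = m₀ by omega, show m₂ + (n - m₂) = n by omega,
      hm₀, hm₂, hn] at this
    exact Nat.find_min hP (show m₀ + m₂ - n < m₀ by omega)
      ⟨by omega, le_antisymm (hle _ (by omega)) (by linarith)⟩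

def window (X : ℕ → ℕ) (j m : ℕ) : List ℕ := (List.range m).map fun i => X (j + i)

def windowSum (X : ℕ → ℕ) (j m : ℕ) : ℕ := ∑ i ∈ range m, X (j + i)

def IsBalanced (X : ℕ → ℕ) : Prop := ∀ j k m, windowSum X j m ≤ windowSum X k m + 1

variable {X : ℕ → ℕ}

@[simp] lemma length_window (j m : ℕ) : (window X j m).length = m := by simp [window]

lemma getElem_window {j m i : ℕ} (h : i < (window X j m).length) :
    (window X j m)[i] = X (j + i) := by simp [window]

@[simp] lemma sum_window (j m : ℕ) : (window X j m).sum = windowSum X j m := by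
  induction m with
  | zero => simp [window, windowSum]
  | succ m ih => simp_all [window, windowSum, List.range_succ, sum_range_succ]

lemma take_window (j m i : ℕ) : (window X j m).take i = window X j (min i m) := by
  rw [window, ← List.map_take, List.take_range, window]

lemma seqFactor_window (j m : ℕ) : SeqFactor (window X j m) X := ⟨j, by rw [length_window]; rfl⟩

lemma exists_eq_window {A : List ℕ} {n : ℕ} (hA : A.length = n) (h : SeqFactor A X) :
    ∃ j, A = window X j n :=
  hA ▸ h

lemma seqFactor_replicate_iff {n v : ℕ} :
    SeqFactor (List.replicate n v) X ↔ ∃ j, ∀ i < n, X (j + i) = v := by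
  simp [SeqFactor, eq_comm (a := List.replicate _ _), List.eq_replicate_iff]

@[simp] lemma windowSum_zero (j : ℕ) : windowSum X j 0 = 0 := rfl

lemma windowSum_add (j a b : ℕ) :
    windowSum X j (a + b) = windowSum X j a + windowSum X (j + a) b := by
  simp only [windowSum, sum_range_add, add_assoc]

lemma windowSum_succ (j m : ℕ) : windowSum X j (m + 1) = windowSum X j m + X (j + m) := by
  simp [windowSum, sum_range_succ]

lemma windowSum_succ' (j m : ℕ) : windowSum X j (m + 1) = X j + windowSum X (j + 1) m := by
  rw [add_comm m, windowSum_add]; simp [windowSum]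

lemma windowSum_eq_zero_iff {j m : ℕ} : windowSum X j m = 0 ↔ ∀ i < m, X (j + i) = 0 := by
  simp [windowSum, sum_eq_zero_iff]

lemma window_eq_of_windowSum_eq {a b n : ℕ} (h : ∀ m ≤ n, windowSum X a m = windowSum X b m) :
    window X a n = window X b n := by
  refine List.ext_getElem (by simp) fun i hia hib => ?_
  simp only [length_window] at hia
  have := h (i + 1) hia
  rw [windowSum_succ, windowSum_succ, h i hia.le] at this
  rw [getElem_window, getElem_window]
  omega

lemma isBalanced_of_abs_sum_sub_le_one (h : ∀ A B : List ℕ, SeqFactor A X → SeqFactor B X →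
    A.length = B.length → |(A.sum : ℤ) - (B.sum : ℤ)| ≤ 1) : IsBalanced X := fun j k m => by
  have := h _ _ (seqFactor_window j m) (seqFactor_window k m) (by simp)
  rw [sum_window, sum_window, abs_le] at this
  omega

lemma locallyHeavyWord_window_iff {j n : ℕ} :
    LocallyHeavyWord (window X j n) ↔ ∀ m ≤ n, windowSum X j n * m ≤ windowSum X j m * n := by
  have key : ∀ m, 1 ≤ m → m ≤ n → ((windowSum X j n : ℝ) / n ≤ (windowSum X j m : ℝ) / m ↔
      windowSum X j n * m ≤ windowSum X j m * n) := fun m hm hmn => by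
    rw [div_le_div_iff₀ (by norm_cast; omega) (by norm_cast)]
    norm_cast
  simp only [LocallyHeavyWord, length_window, take_window, sum_window]
  constructor
  · intro h m hm
    rcases Nat.eq_zero_or_pos m with rfl | hm0
    · simp
    · simpa [key m hm0 hm, min_eq_left hm] using h m hm0 hm
  · intro h m hm0 hm
    simpa [key m hm0 hm, min_eq_left hm] using h m hm

section Balanced

variable (hbal : IsBalanced X)
include hbal

lemma windowSum_mul_lt_of_locallyHeavy {c n : ℕ} (hn : 0 < n)
    (h : LocallyHeavyWord (window X c n)) :
    ∀ m ≤ n, windowSum X c m * n < windowSum X c n * m + n := by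
  rw [locallyHeavyWord_window_iff] at h
  set T := windowSum X c n
  have key := lt_of_increment_le_add (n := n) (c := n) (d := fun m => windowSum X c m * n - T * m)
    (by exact_mod_cast hn) (fun m hm => by have := h m hm; linarith)
    (by simp) (by ring) fun a b l _ _ => by
      have := hbal (c + a) (c + b) l
      have : (windowSum X (c + a) l : ℤ) * n ≤ (windowSum X (c + b) l + 1) * n := by
        gcongr; exact_mod_cast this
      simp only [windowSum_add]; push_cast; linarith
  intro m hm
  have := key m hm
  omega

lemma window_eq_of_locallyHeavy {a b n : ℕ} (hn : 0 < n)
    (ha : LocallyHeavyWord (window X a n)) (hb : LocallyHeavyWord (window X b n))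
    (hsum : windowSum X a n = windowSum X b n) : window X a n = window X b n := by
  refine window_eq_of_windowSum_eq fun m hm => ?_
  have haU := windowSum_mul_lt_of_locallyHeavy hbal hn ha m hm
  have hbU := windowSum_mul_lt_of_locallyHeavy hbal hn hb m hm
  have haL := locallyHeavyWord_window_iff.1 ha m hm
  have hbL := locallyHeavyWord_window_iff.1 hb m hm
  rw [hsum] at haU haL
  -- Both prefix weights lie in `[T m / n, T m / n + 1)`, `T` being the common weight.
  have h₁ : windowSum X a m < windowSum X b m + 1 :=
    Nat.lt_of_mul_lt_mul_right (a := n) (by linarith)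
  have h₂ : windowSum X b m < windowSum X a m + 1 :=
    Nat.lt_of_mul_lt_mul_right (a := n) (by linarith)
  omega

lemma windowSum_ne_succ_of_locallyHeavy {a b n : ℕ}
    (ha : LocallyHeavyWord (window X a n)) (hb : LocallyHeavyWord (window X b n))
    (hb0 : 0 < windowSum X b n) (han : windowSum X a n < n) :
    windowSum X a n ≠ windowSum X b n + 1 := by
  intro hab
  obtain ⟨k, rfl⟩ : ∃ k, n = k + 1 := ⟨n - 1, by omega⟩
  have hXb : 0 < X b := by
    have := locallyHeavyWord_window_iff.1 hb 1 (by omega)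
    rw [show windowSum X b 1 = X b by simp [windowSum]] at this
    exact Nat.pos_of_ne_zero fun h => by rw [h] at this; omega
  have hak : windowSum X a k ≤ windowSum X b (k + 1) := by
    have := hbal a (b + 1) k
    have := windowSum_succ' (X := X) b k
    omega
  have hLa := locallyHeavyWord_window_iff.1 ha k (by omega)
  have : windowSum X a (k + 1) * k ≤ windowSum X b (k + 1) * (k + 1) :=
    hLa.trans (Nat.mul_le_mul_right _ hak)
  rw [hab] at this han
  nlinarith

end Balanced

lemma exists_two_locallyHeavy (hbal : IsBalanced X) {a b n : ℕ} (hn : 0 < n)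
    (ha : LocallyHeavyWord (window X a n)) (hb : LocallyHeavyWord (window X b n))
    (hab : windowSum X a n = windowSum X b n + 1) :
    ∃ A B : List ℕ, A ≠ B ∧
      (A.length = n ∧ SeqFactor A X ∧ LocallyHeavyWord A) ∧
      (B.length = n ∧ SeqFactor B X ∧ LocallyHeavyWord B) ∧
      ∀ C : List ℕ, (C.length = n ∧ SeqFactor C X ∧ LocallyHeavyWord C) → C = A ∨ C = B := by
  refine ⟨window X a n, window X b n, fun h => ?_, ⟨by simp, seqFactor_window a n, ha⟩,
    ⟨by simp, seqFactor_window b n, hb⟩, ?_⟩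
  · have := congrArg List.sum h
    simp only [sum_window] at this
    omega
  · rintro C ⟨hlen, hfac, hC⟩
    obtain ⟨c, rfl⟩ := exists_eq_window hlen hfac
    have := hbal a c n
    have := hbal c b n
    rcases (by omega : windowSum X c n = windowSum X a n ∨ windowSum X c n = windowSum X b n)
      with h | h
    · exact Or.inl (window_eq_of_locallyHeavy hbal hn hC ha h)
    · exact Or.inr (window_eq_of_locallyHeavy hbal hn hC hb h)

lemma locallyHeavyWord_window_of_forall_eq_zero {j k : ℕ} (h : ∀ i < k, X (j + 1 + i) = 0) :
    LocallyHeavyWord (window X j (k + 1)) := by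
  have hsum : ∀ m ≤ k, windowSum X j (m + 1) = X j := fun m hm => by
    rw [windowSum_succ', windowSum_eq_zero_iff.2 fun i hi => h i (by omega), add_zero]
  refine locallyHeavyWord_window_iff.2 fun m hm => ?_
  rcases m with _ | m
  · simp
  · rw [hsum k le_rfl, hsum m (by omega)]
    exact Nat.mul_le_mul_left _ hm

section Binary

variable (hX : ∀ i, X i = 0 ∨ X i = 1)
include hX

lemma windowSum_le (j m : ℕ) : windowSum X j m ≤ m := by
  simpa [windowSum] using
    sum_le_sum fun i (_ : i ∈ range m) => (hX (j + i)).elim (·.le.trans zero_le_one) (·.le)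

lemma windowSum_eq_self_iff {j m : ℕ} : windowSum X j m = m ↔ ∀ i < m, X (j + i) = 1 := by
  have := sum_eq_sum_iff_of_le (s := range m) (f := fun i => X (j + i)) (g := fun _ => 1)
    fun i _ => (hX (j + i)).elim (·.le.trans zero_le_one) (·.le)
  simpa [windowSum] using this

lemma locallyHeavyWord_window_of_forall_eq_one {j k : ℕ} (h : ∀ i < k, X (j + i) = 1) :
    LocallyHeavyWord (window X j (k + 1)) := by
  have hsum : ∀ m ≤ k, windowSum X j m = m := fun m hm =>
    (windowSum_eq_self_iff hX).2 fun i hi => h i (by omega)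
  refine locallyHeavyWord_window_iff.2 fun m hm => ?_
  rcases (by omega : m = k + 1 ∨ m ≤ k) with rfl | hm
  · rfl
  · rw [windowSum_succ, hsum k le_rfl, hsum m hm]
    have := hX (j + k)
    rcases this with h | h <;> rw [h] <;> nlinarith

lemma exists_locallyHeavy_pair_of_run_one {N k : ℕ} (hrun : SeqFactor (List.replicate N 1) X)
    (hmax : ¬ SeqFactor (List.replicate (N + 1) 1) X) (hk : k + 1 ≤ N) :
    ∃ a b, LocallyHeavyWord (window X a (k + 1)) ∧ LocallyHeavyWord (window X b (k + 1)) ∧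
      windowSum X a (k + 1) = windowSum X b (k + 1) + 1 := by
  obtain ⟨j, hj⟩ := seqFactor_replicate_iff.1 hrun
  have hjN : X (j + N) = 0 := (hX (j + N)).resolve_right fun h => hmax <|
    seqFactor_replicate_iff.2 ⟨j, fun i hi => (Nat.lt_succ_iff_lt_or_eq.1 hi).elim (hj i) (· ▸ h)⟩
  obtain ⟨r, rfl⟩ : ∃ r, N = r + (k + 1) := ⟨N - (k + 1), by omega⟩
  have hones : ∀ i < k + 1, X (j + r + i) = 1 := fun i hi => by
    rw [add_assoc]; exact hj _ (by omega)
  refine ⟨j + r, j + r + 1,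
    locallyHeavyWord_window_of_forall_eq_one hX fun i hi => hones i (by omega),
    locallyHeavyWord_window_of_forall_eq_one hX fun i hi => ?_, ?_⟩
  · rw [add_assoc _ 1]; exact hones _ (by omega)
  · rw [(windowSum_eq_self_iff hX).2 hones, windowSum_succ,
      (windowSum_eq_self_iff hX).2 fun i hi => by rw [add_assoc _ 1]; exact hones _ (by omega),
      show j + r + 1 + k = j + (r + (k + 1)) by omega, hjN]

lemma exists_locallyHeavy_pair_of_run_zero (hbal : IsBalanced X) {N k : ℕ}
    (hrun : SeqFactor (List.replicate N 0) X)
    (hmax : ¬ SeqFactor (List.replicate (N + 1) 0) X) (hk : k + 1 ≤ N) :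
    ∃ a b, LocallyHeavyWord (window X a (k + 1)) ∧ LocallyHeavyWord (window X b (k + 1)) ∧
      windowSum X a (k + 1) = windowSum X b (k + 1) + 1 := by
  obtain ⟨j, hj⟩ := seqFactor_replicate_iff.1 hrun
  have hjN : X (j + N) = 1 := (hX (j + N)).resolve_left fun h => hmax <|
    seqFactor_replicate_iff.2 ⟨j, fun i hi => (Nat.lt_succ_iff_lt_or_eq.1 hi).elim (hj i) (· ▸ h)⟩
  have hb : windowSum X j (k + 1) = 0 := windowSum_eq_zero_iff.2 fun i hi => hj i (by omega)
  have ha : windowSum X (j + N) (k + 1) = 1 := by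
    have := hbal (j + N) j (k + 1)
    have := windowSum_succ' (X := X) (j + N) k
    omega
  refine ⟨j + N, j, locallyHeavyWord_window_of_forall_eq_zero (windowSum_eq_zero_iff.1 ?_),
    locallyHeavyWord_window_of_forall_eq_zero fun i hi => ?_, by rw [ha, hb]⟩
  · rw [windowSum_succ', hjN] at ha; omega
  · rw [add_assoc]; exact hj _ (by omega)

lemma eq_of_locallyHeavy_of_not_seqFactor_replicate (hbal : IsBalanced X) {n : ℕ}
    (h0 : ¬ SeqFactor (List.replicate n 0) X) (h1 : ¬ SeqFactor (List.replicate n 1) X)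
    {A B : List ℕ} (hA : A.length = n ∧ SeqFactor A X ∧ LocallyHeavyWord A)
    (hB : B.length = n ∧ SeqFactor B X ∧ LocallyHeavyWord B) : A = B := by
  obtain ⟨a, rfl⟩ := exists_eq_window hA.1 hA.2.1
  obtain ⟨b, rfl⟩ := exists_eq_window hB.1 hB.2.1
  have hpos : ∀ j, 0 < windowSum X j n := fun j => Nat.pos_of_ne_zero fun h =>
    h0 (seqFactor_replicate_iff.2 ⟨j, windowSum_eq_zero_iff.1 h⟩)
  have hlt : ∀ j, windowSum X j n < n := fun j => (windowSum_le hX j n).lt_of_ne fun h =>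
    h1 (seqFactor_replicate_iff.2 ⟨j, (windowSum_eq_self_iff hX).1 h⟩)
  have hab := windowSum_ne_succ_of_locallyHeavy hbal hA.2.2 hB.2.2 (hpos b) (hlt a)
  have hba := windowSum_ne_succ_of_locallyHeavy hbal hB.2.2 hA.2.2 (hpos a) (hlt b)
  have := hbal a b n
  have := hbal b a n
  exact window_eq_of_locallyHeavy hbal ((hpos a).trans (hlt a)) hA.2.2 hB.2.2 (by omega)

end Binary

end Sturmian

open Sturmian in
theorem sturmian_two_heavy_then_one_general
    (X : ℕ → ℕ) (hX : ∀ i, X i = 0 ∨ X i = 1)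
    (hSturm : ∀ A B : List ℕ, SeqFactor A X → SeqFactor B X → A.length = B.length →
      |(A.sum : ℤ) - (B.sum : ℤ)| ≤ 1)
    (N : ℕ)
    (hN : (SeqFactor (List.replicate N 1) X ∨ SeqFactor (List.replicate N 0) X) ∧
      ∀ n : ℕ, (SeqFactor (List.replicate n 1) X ∨ SeqFactor (List.replicate n 0) X) → n ≤ N) :
    (∀ n : ℕ, 1 ≤ n → n ≤ N → ∃ A B : List ℕ, A ≠ B ∧
        (A.length = n ∧ SeqFactor A X ∧ LocallyHeavyWord A) ∧
        (B.length = n ∧ SeqFactor B X ∧ LocallyHeavyWord B) ∧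
        ∀ C : List ℕ, (C.length = n ∧ SeqFactor C X ∧ LocallyHeavyWord C) → C = A ∨ C = B) ∧
    (∀ n : ℕ, N < n → ∀ A B : List ℕ,
        (A.length = n ∧ SeqFactor A X ∧ LocallyHeavyWord A) →
        (B.length = n ∧ SeqFactor B X ∧ LocallyHeavyWord B) → A = B) := by
  have hbal := isBalanced_of_abs_sum_sub_le_one hSturm
  obtain ⟨hrun, hmax⟩ := hN
  refine ⟨fun n hn hnN => ?_, fun n hn A B hA hB => ?_⟩
  · obtain ⟨k, rfl⟩ : ∃ k, n = k + 1 := ⟨n - 1, by omega⟩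
    obtain ⟨a, b, ha, hb, hab⟩ := hrun.elim
      (exists_locallyHeavy_pair_of_run_one hX · (fun h => by have := hmax _ (.inl h); omega) hnN)
      (exists_locallyHeavy_pair_of_run_zero hX hbal · (fun h => by have := hmax _ (.inr h); omega)
        hnN)
    exact exists_two_locallyHeavy hbal k.succ_pos ha hb hab
  · exact eq_of_locallyHeavy_of_not_seqFactor_replicate hX hbal
      (fun h => by have := hmax n (.inr h); omega) (fun h => by have := hmax n (.inl h); omega)
      hA hB

/-- Let `X` be a binary Sturmian sequence containing at least two ones and
two zeroes, and let `N` be the largest `n` such that `1^n` or `0^n` is a factor of `X`. Then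
`X` has exactly two distinct locally heavy factors of each length `1 ≤ n ≤ N`, and at most one
locally heavy factor of each length `n > N`. -/
theorem sturmian_two_heavy_then_one
    (X : ℕ → ℕ) (hX : ∀ i, X i = 0 ∨ X i = 1)
    (hSturm : ∀ A B : List ℕ, SeqFactor A X → SeqFactor B X → A.length = B.length →
      |(A.sum : ℤ) - (B.sum : ℤ)| ≤ 1)
    (h1 : ∃ i j : ℕ, i ≠ j ∧ X i = 1 ∧ X j = 1)
    (h0 : ∃ i j : ℕ, i ≠ j ∧ X i = 0 ∧ X j = 0)
    (N : ℕ)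
    (hN : (SeqFactor (List.replicate N 1) X ∨ SeqFactor (List.replicate N 0) X) ∧
      ∀ n : ℕ, (SeqFactor (List.replicate n 1) X ∨ SeqFactor (List.replicate n 0) X) → n ≤ N) :
    (∀ n : ℕ, 1 ≤ n → n ≤ N → ∃ A B : List ℕ, A ≠ B ∧
        (A.length = n ∧ SeqFactor A X ∧ LocallyHeavyWord A) ∧
        (B.length = n ∧ SeqFactor B X ∧ LocallyHeavyWord B) ∧
        ∀ C : List ℕ, (C.length = n ∧ SeqFactor C X ∧ LocallyHeavyWord C) → C = A ∨ C = B) ∧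
    (∀ n : ℕ, N < n → ∀ A B : List ℕ,
        (A.length = n ∧ SeqFactor A X ∧ LocallyHeavyWord A) →
        (B.length = n ∧ SeqFactor B X ∧ LocallyHeavyWord B) → A = B) :=
  sturmian_two_heavy_then_one_general X hX hSturm N hN
end
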